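/- arXiv:2303.13348 — 9 statements merged into one kernel-verified Lean document; each statement's English description precedes it below -/
import Mathlib

section
/- Let $k\ge 1$ and $n\ge 1$ be integers, and write $k=qn+r$ with integers $q\ge 0$ and $r\in\{1,\dots,n\}$. For an ellipsoid $E(a_1,\dots,a_n)$ with $0<a_1\le\dots\le a_n$, define $c_k(E(\bm a))$ as the $k$-th smallest element (with multiplicity) of the multiset of all positive integer multiples of the $a_j$'s. Then the maximum of the ratio $c_k(E(\bm a))/(a_1\cdots a_n)^{1/n}$ over all such tuples $\bm a$ equals $(q+1)^{(n-r+1)/n}(q+2)^{(r-1)/n}$. -/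
/-!
Write `N(c) = ∑ᵢ ⌊c / aᵢ⌋₊` for the number of multiples `m aᵢ ≤ c`, so that `c_k ≤ c` as soon as
`k ≤ N(c)`. Put `V = (q+1)^(n-r+1) (q+2)^(r-1)` and `c = (V ∏ aᵢ)^(1/n)`. If `N(c) < k`, the
integers `mᵢ = ⌊c / aᵢ⌋₊` sum to at most `qn + r - 1` while `∏ (mᵢ + 1) > ∏ c / aᵢ = V`. But
Bernoulli's inequality gives the tangent bound `m + 1 ≤ (q+1) ((q+2)/(q+1))^(m-q)` at every integer
`m`, and multiplying these bounds yields `∏ (mᵢ + 1) ≤ V`. Equality is attained by `r - 1` axes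
`1/(q+2)` and `n - r + 1` axes `1/(q+1)`, whose `k`-th capacity is `1`.
-/

/-- `ckE a k` : the `k`-th smallest element (with multiplicity) of the multiset of all
positive integer multiples of the entries of `a`; i.e. the `k`-th Ekeland–Hofer capacity of
the ellipsoid `E(a)`. -/
noncomputable def ckE {n : ℕ} (a : Fin n → ℝ) (k : ℕ) : ℝ :=
  sInf {c : ℝ | k ≤ {p : ℕ × Fin n | 1 ≤ p.1 ∧ (p.1 : ℝ) * a p.2 ≤ c}.ncard}

open Finset

@[to_additive]
lemma prod_ite_val_lt {M : Type*} [CommMonoid M] {n j : ℕ} (hj : j ≤ n) (x y : M) :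
    ∏ i : Fin n, (if (i : ℕ) < j then x else y) = x ^ j * y ^ (n - j) := by
  rw [prod_ite, prod_const, prod_const, filter_not, card_univ_sdiff, Fin.card_filter_val_lt,
    Fintype.card_fin, min_eq_right hj]

lemma add_le_mul_one_add_inv_rpow {s : ℝ} (hs : 0 < s) (j : ℤ) :
    s + j ≤ s * (1 + s⁻¹) ^ (j : ℝ) := by
  rw [Real.rpow_intCast]
  obtain ⟨i, rfl | rfl⟩ := j.eq_nat_or_neg
  · have hbern := one_add_mul_le_pow (a := s⁻¹) (by linarith [inv_pos.2 hs]) i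
    rw [zpow_natCast]
    calc s + (i : ℤ) = s * (1 + i * s⁻¹) := by field_simp; push_cast; ring
      _ ≤ _ := by gcongr
  · have hinv : (s + 1)⁻¹ ≤ 1 := inv_le_one_of_one_le₀ (by linarith)
    have hbern := one_add_mul_le_pow (a := -(s + 1)⁻¹) (by linarith) i
    have h : (1 + s⁻¹)⁻¹ = 1 + -(s + 1)⁻¹ := by field_simp; ring
    rw [zpow_neg, ← inv_zpow, h, zpow_natCast]
    calc s + ((-i : ℤ) : ℝ) ≤ s * (1 + i * -(s + 1)⁻¹) := by
          push_cast
          field_simp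
          nlinarith
      _ ≤ _ := by gcongr

theorem prod_add_one_le_of_sum_le {ι : Type*} (s : Finset ι) (m : ι → ℕ) {q j : ℕ} (hj : j ≤ #s)
    (hm : ∑ i ∈ s, m i ≤ q * #s + j) :
    ∏ i ∈ s, (m i + 1) ≤ (q + 1) ^ (#s - j) * (q + 2) ^ j := by
  set t : ℝ := 1 + ((q : ℝ) + 1)⁻¹
  have hexp : ∑ i ∈ s, ((m i : ℝ) - q) ≤ j := by
    have : ((∑ i ∈ s, m i : ℕ) : ℝ) ≤ q * #s + j := by exact_mod_cast hm
    rw [sum_sub_distrib, sum_const, nsmul_eq_mul]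
    push_cast at this
    linarith
  suffices h : ∏ i ∈ s, ((m i : ℝ) + 1) ≤ ((q : ℝ) + 1) ^ (#s - j) * ((q : ℝ) + 2) ^ j by
    exact_mod_cast h
  calc ∏ i ∈ s, ((m i : ℝ) + 1) ≤ ∏ i ∈ s, ((q : ℝ) + 1) * t ^ ((m i : ℝ) - q) := by
        gcongr with i
        have := add_le_mul_one_add_inv_rpow (by positivity : (0 : ℝ) < q + 1) (m i - q)
        push_cast at this
        linarith
    _ = ((q : ℝ) + 1) ^ #s * t ^ (∑ i ∈ s, ((m i : ℝ) - q)) := by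
        rw [prod_mul_distrib, prod_const, Real.rpow_sum_of_pos (by positivity)]
    _ ≤ ((q : ℝ) + 1) ^ #s * t ^ (j : ℝ) := by
        gcongr
        exact le_add_of_nonneg_right (by positivity)
    _ = ((q : ℝ) + 1) ^ (#s - j) * ((q : ℝ) + 2) ^ j := by
        rw [Real.rpow_natCast, ← Nat.sub_add_cancel hj, pow_add, mul_assoc, ← mul_pow,
          Nat.sub_add_cancel hj]
        congr 2
        simp only [t]
        field_simp
        ring

lemma ncard_multiples_le_eq_sum_floor {n : ℕ} {a : Fin n → ℝ} (ha : ∀ i, 0 < a i) (c : ℝ) :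
    {p : ℕ × Fin n | 1 ≤ p.1 ∧ (p.1 : ℝ) * a p.2 ≤ c}.ncard = ∑ i, ⌊c / a i⌋₊ := by
  have hset : {p : ℕ × Fin n | 1 ≤ p.1 ∧ (p.1 : ℝ) * a p.2 ≤ c} =
      ↑(univ.biUnion fun i => (Icc 1 ⌊c / a i⌋₊).map ⟨(·, i), Prod.mk_left_injective i⟩) := by
    ext ⟨m, i⟩
    simp only [Set.mem_ofPred_eq, coe_biUnion, coe_map, coe_univ, Set.mem_univ,
      Function.Embedding.coeFn_mk, coe_Icc, Set.iUnion_true, Set.mem_iUnion, Set.mem_image,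
      Set.mem_Icc, Prod.mk.injEq]
    constructor
    · rintro ⟨hm, hmc⟩
      exact ⟨i, m, ⟨hm, (Nat.le_floor_iff' (by omega)).2 ((le_div_iff₀ (ha i)).2 hmc)⟩, rfl, rfl⟩
    · rintro ⟨i, m, ⟨hm, hmc⟩, rfl, rfl⟩
      exact ⟨hm, (le_div_iff₀ (ha i)).1 ((Nat.le_floor_iff' (by omega)).1 hmc)⟩
  rw [hset, Set.ncard_coe_finset, card_biUnion]
  · simp
  · intro i _ j _ hij
    simp only [disjoint_left, mem_map, Function.Embedding.coeFn_mk]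
    rintro _ ⟨_, -, rfl⟩ ⟨_, -, h⟩
    exact hij (Prod.ext_iff.1 h).2.symm

lemma ckE_eq_sInf_sum_floor {n : ℕ} {a : Fin n → ℝ} (ha : ∀ i, 0 < a i) (k : ℕ) :
    ckE a k = sInf {c : ℝ | k ≤ ∑ i, ⌊c / a i⌋₊} := by
  simp only [ckE, ncard_multiples_le_eq_sum_floor ha]

lemma ckE_le_of_le_sum_floor {n k : ℕ} {a : Fin n → ℝ} (ha : ∀ i, 0 < a i) (hk : 1 ≤ k)
    {c : ℝ} (hc : k ≤ ∑ i, ⌊c / a i⌋₊) : ckE a k ≤ c := by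
  rw [ckE_eq_sInf_sum_floor ha]
  refine csInf_le ⟨0, fun c' hc' => ?_⟩ hc
  by_contra! hneg
  have : ∑ i, ⌊c' / a i⌋₊ = 0 :=
    sum_eq_zero fun i _ => Nat.floor_of_nonpos (div_nonpos_of_nonpos_of_nonneg hneg.le (ha i).le)
  simp only [Set.mem_ofPred_eq, this] at hc'
  omega

lemma ckE_eq_of_sum_floor {n k : ℕ} {a : Fin n → ℝ} (ha : ∀ i, 0 < a i) {c : ℝ}
    (hc : k ≤ ∑ i, ⌊c / a i⌋₊) (hlt : ∀ c' < c, ∑ i, ⌊c' / a i⌋₊ < k) : ckE a k = c := by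
  rw [ckE_eq_sInf_sum_floor ha]
  refine le_antisymm (csInf_le ⟨c, ?_⟩ hc) (le_csInf ⟨c, hc⟩ ?_) <;>
    exact fun c' hc' => not_lt.1 fun h => (hlt c' h).not_ge hc'

theorem ckE_le_rpow {n k q j : ℕ} {a : Fin n → ℝ} (ha : ∀ i, 0 < a i) (hj : j < n)
    (hk : k = q * n + j + 1) :
    ckE a k ≤ (((q : ℝ) + 1) ^ (n - j) * ((q : ℝ) + 2) ^ j * ∏ i, a i) ^ ((1 : ℝ) / n) := by
  set V : ℝ := ((q : ℝ) + 1) ^ (n - j) * ((q : ℝ) + 2) ^ j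
  set c := (V * ∏ i, a i) ^ ((1 : ℝ) / n)
  have hprod_pos : 0 < ∏ i, a i := prod_pos fun i _ => ha i
  have hc : 0 < c := Real.rpow_pos_of_pos (mul_pos (by positivity) hprod_pos) _
  apply ckE_le_of_le_sum_floor ha (by omega)
  by_contra! hlt
  have hV : ∏ i, c / a i = V := by
    rw [prod_div_distrib, prod_const, card_univ, Fintype.card_fin, ← Real.rpow_natCast,
      ← Real.rpow_mul (by positivity), one_div_mul_cancel (by norm_cast; omega), Real.rpow_one,
      mul_div_cancel_right₀ _ hprod_pos.ne']
  have hfloor : ∏ i, c / a i < ∏ i, ((⌊c / a i⌋₊ : ℕ) + 1 : ℝ) :=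
    prod_lt_prod_of_nonempty (fun i _ => div_pos hc (ha i)) (fun i _ => Nat.lt_floor_add_one _)
      (univ_nonempty_iff.2 ⟨⟨0, by omega⟩⟩)
  have hbound := prod_add_one_le_of_sum_le univ (fun i => ⌊c / a i⌋₊) (q := q) (j := j)
    (by simp; omega) (by simp; omega)
  simp only [card_univ, Fintype.card_fin] at hbound
  rw [hV] at hfloor
  have : (∏ i, ((⌊c / a i⌋₊ : ℕ) + 1 : ℝ)) ≤ V := by simp only [V]; exact_mod_cast hbound
  linarith

noncomputable def extremalAxes (n q j : ℕ) : Fin n → ℝ :=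
  fun i => if (i : ℕ) < j then ((q : ℝ) + 2)⁻¹ else ((q : ℝ) + 1)⁻¹

lemma extremalAxes_pos (n q j : ℕ) (i : Fin n) : 0 < extremalAxes n q j i := by
  unfold extremalAxes; split_ifs <;> positivity

lemma extremalAxes_monotone (n q j : ℕ) : Monotone (extremalAxes n q j) := by
  intro i i' hii'
  unfold extremalAxes
  split_ifs
  · rfl
  · gcongr; linarith
  · omega
  · rfl

lemma sum_floor_div_extremalAxes {n q j : ℕ} (hj : j ≤ n) (c : ℝ) :
    ∑ i, ⌊c / extremalAxes n q j i⌋₊ =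
      j * ⌊c * ((q : ℝ) + 2)⌋₊ + (n - j) * ⌊c * ((q : ℝ) + 1)⌋₊ := by
  simp only [extremalAxes, apply_ite, div_inv_eq_mul, sum_ite_val_lt hj, smul_eq_mul]

lemma prod_extremalAxes {n q j : ℕ} (hj : j ≤ n) :
    ∏ i, extremalAxes n q j i = (((q : ℝ) + 1) ^ (n - j) * ((q : ℝ) + 2) ^ j)⁻¹ := by
  unfold extremalAxes
  rw [prod_ite_val_lt hj, mul_inv, inv_pow, inv_pow, mul_comm]

lemma ckE_extremalAxes {n q j : ℕ} (hj : j < n) :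
    ckE (extremalAxes n q j) (q * n + j + 1) = 1 := by
  apply ckE_eq_of_sum_floor (extremalAxes_pos n q j)
  · rw [sum_floor_div_extremalAxes hj.le, one_mul, one_mul]
    have h2 : ⌊(q : ℝ) + 2⌋₊ = q + 2 := mod_cast Nat.floor_natCast (q + 2)
    have h1 : ⌊(q : ℝ) + 1⌋₊ = q + 1 := mod_cast Nat.floor_natCast (q + 1)
    rw [h1, h2]
    obtain ⟨l, rfl⟩ : ∃ l, n = j + (l + 1) := ⟨n - j - 1, by omega⟩
    rw [Nat.add_sub_cancel_left]
    nlinarith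
  · intro c hc
    have hfloor (m : ℕ) (hm : m ≠ 0) : ⌊c * m⌋₊ < m :=
      (Nat.floor_lt' hm).2 (mul_lt_of_lt_one_left (by positivity) hc)
    have h2 : ⌊c * ((q : ℝ) + 2)⌋₊ ≤ q + 1 := by
      have := hfloor (q + 2) (by omega); push_cast at this; omega
    have h1 : ⌊c * ((q : ℝ) + 1)⌋₊ ≤ q := by
      have := hfloor (q + 1) (by omega); push_cast at this; omega
    rw [sum_floor_div_extremalAxes hj.le]
    calc j * ⌊c * ((q : ℝ) + 2)⌋₊ + (n - j) * ⌊c * ((q : ℝ) + 1)⌋₊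
        ≤ j * (q + 1) + (n - j) * q := by gcongr
      _ < q * n + j + 1 := by
        obtain ⟨l, rfl⟩ : ∃ l, n = j + l := ⟨n - j, by omega⟩
        rw [Nat.add_sub_cancel_left]
        nlinarith

theorem stmt1_general (n k q r : ℕ) (hr1 : 1 ≤ r) (hrn : r ≤ n) (hqr : k = q * n + r) :
    IsGreatest
      {x : ℝ | ∃ a : Fin n → ℝ, (∀ i, 0 < a i) ∧ Monotone a ∧
        x = ckE a k / (∏ i, a i) ^ ((1:ℝ)/(n:ℝ))}
      (((q : ℝ) + 1) ^ (((n : ℝ) - (r : ℝ) + 1)/(n : ℝ)) *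
        ((q : ℝ) + 2) ^ (((r : ℝ) - 1)/(n : ℝ))) := by
  obtain ⟨j, rfl, hjn⟩ : ∃ j, r = j + 1 ∧ j < n := ⟨r - 1, by omega, by omega⟩
  have hvalue : ((q : ℝ) + 1) ^ (((n : ℝ) - ((j + 1 : ℕ) : ℝ) + 1) / n) *
      ((q : ℝ) + 2) ^ ((((j + 1 : ℕ) : ℝ) - 1) / n) =
      (((q : ℝ) + 1) ^ (n - j) * ((q : ℝ) + 2) ^ j) ^ ((1 : ℝ) / n) := by
    rw [Real.mul_rpow (by positivity) (by positivity), ← Real.rpow_natCast,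
      ← Real.rpow_natCast ((q : ℝ) + 2), ← Real.rpow_mul (by positivity),
      ← Real.rpow_mul (by positivity)]
    congr 2 <;> push_cast [Nat.cast_sub hjn.le] <;> ring
  rw [hvalue]
  refine ⟨⟨extremalAxes n q j, extremalAxes_pos n q j, extremalAxes_monotone n q j, ?_⟩, ?_⟩
  · rw [hqr, ← add_assoc, ckE_extremalAxes hjn, prod_extremalAxes hjn.le,
      Real.inv_rpow (by positivity), div_inv_eq_mul, one_mul]
  · rintro x ⟨a, ha, -, rfl⟩
    have hprod_pos : 0 < ∏ i, a i := prod_pos fun i _ => ha i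
    rw [div_le_iff₀ (Real.rpow_pos_of_pos hprod_pos _),
      ← Real.mul_rpow (by positivity) hprod_pos.le]
    exact ckE_le_rpow ha hjn (by omega)

/-- The global maximum of the `k`-th capacity ratio over `2n`-dimensional ellipsoids is
`(q+1)^{(n-r+1)/n} (q+2)^{(r-1)/n}`, where `k = qn + r`, `q ≥ 0`, `1 ≤ r ≤ n`. -/
theorem stmt1 (n k q r : ℕ) (hn : 1 ≤ n) (hk : 1 ≤ k) (hr1 : 1 ≤ r) (hrn : r ≤ n)
    (hqr : k = q * n + r) :
    IsGreatest
      {x : ℝ | ∃ a : Fin n → ℝ, (∀ i, 0 < a i) ∧ Monotone a ∧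
        x = ckE a k / (∏ i, a i) ^ ((1:ℝ)/(n:ℝ))}
      (((q : ℝ) + 1) ^ (((n : ℝ) - (r : ℝ) + 1)/(n : ℝ)) *
        ((q : ℝ) + 2) ^ (((r : ℝ) - 1)/(n : ℝ))) :=
  stmt1_general n k q r hr1 hrn hqr
end

section
/- With the same capacity function $c_k$ on ellipsoids as above and $k=qn+r$ ($q\ge 0$, $1\le r\le n$), the ratio $\bm a\mapsto c_k(E(\bm a))/(a_1\cdots a_n)^{1/n}$ attains its global maximum precisely at those tuples $\bm a$ (up to permutation and positive rescaling) with $a_i/a_n=(q+1)/(q+2)$ for $1\le i\le r-1$ and $a_i=a_n$ for $r\le i\le n$. -/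
open Finset

noncomputable def multiplesCount {ι : Type*} [Fintype ι] (a : ι → ℝ) (c : ℝ) : ℕ :=
  ∑ j, ⌊c / a j⌋₊

theorem ncard_multiples_le_eq {ι : Type*} [Fintype ι] {a : ι → ℝ} (ha : ∀ j, 0 < a j) (c : ℝ) :
    {p : ℕ × ι | 1 ≤ p.1 ∧ (p.1 : ℝ) * a p.2 ≤ c}.ncard = multiplesCount a c := by
  classical
  have hset : {p : ℕ × ι | 1 ≤ p.1 ∧ (p.1 : ℝ) * a p.2 ≤ c} =
      ↑(univ.biUnion fun j ↦
        (Icc 1 ⌊c / a j⌋₊).map ⟨fun m ↦ (m, j), fun _ _ h ↦ (Prod.ext_iff.1 h).1⟩) := by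
    ext ⟨m, j⟩
    simp only [Set.mem_ofPred_eq, coe_biUnion, coe_map, coe_Icc, coe_univ, Set.mem_univ,
      Set.iUnion_true, Set.mem_iUnion, Set.mem_image, Set.mem_Icc]
    constructor
    · rintro ⟨hm, hc⟩
      exact ⟨j, m, ⟨hm, Nat.le_floor ((le_div_iff₀ (ha j)).2 hc)⟩, rfl⟩
    · rintro ⟨j, m, ⟨hm, hmc⟩, h⟩
      obtain ⟨rfl, rfl⟩ := Prod.ext_iff.1 h
      have := (Nat.le_floor_iff' (Nat.one_le_iff_ne_zero.1 hm)).1 hmc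
      exact ⟨hm, (le_div_iff₀ (ha j)).1 this⟩
  rw [hset, Set.ncard_coe_finset, card_biUnion]
  · simp [multiplesCount]
  · intro i _ j _ hij
    simp only [disjoint_left, mem_map]
    rintro _ ⟨_, _, rfl⟩ ⟨_, _, h⟩
    exact hij (Prod.ext_iff.1 h).2.symm

theorem sum_tsub_one_add_card {ι : Type*} [Fintype ι] {m : ι → ℕ} (hm : ∀ j, 0 < m j) :
    ∑ j, (m j - 1) + Fintype.card ι = ∑ j, m j := by
  rw [← card_univ, card_eq_sum_ones, ← sum_add_distrib]
  exact sum_congr rfl fun j _ ↦ Nat.sub_add_cancel (hm j)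

section Capacity

variable {n k : ℕ} {a : Fin n → ℝ}

theorem ckE_eq_sInf (ha : ∀ j, 0 < a j) :
    ckE a k = sInf {c | k ≤ multiplesCount a c} := by
  simp only [ckE, ncard_multiples_le_eq ha]

theorem ckE_le_of_le_multiplesCount (ha : ∀ j, 0 < a j) (hk : 1 ≤ k) {c : ℝ}
    (h : k ≤ multiplesCount a c) : ckE a k ≤ c := by
  rw [ckE_eq_sInf ha]
  refine csInf_le ⟨0, fun x hx ↦ ?_⟩ h
  by_contra! hx0
  have : multiplesCount a x = 0 := sum_eq_zero fun j _ ↦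
    Nat.floor_of_nonpos (div_nonpos_of_nonpos_of_nonneg hx0.le (ha j).le)
  simp only [Set.mem_ofPred_eq, this] at hx
  omega

theorem multiplesCount_lt_of_lt_ckE (ha : ∀ j, 0 < a j) (hk : 1 ≤ k) {c : ℝ}
    (h : c < ckE a k) : multiplesCount a c < k :=
  lt_of_not_ge fun h' ↦ (ckE_le_of_le_multiplesCount ha hk h').not_gt h

theorem ckE_eq_of_multiplesCount (ha : ∀ j, 0 < a j) {t : ℝ} (h : k ≤ multiplesCount a t)
    (h' : ∀ c < t, multiplesCount a c < k) : ckE a k = t := by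
  rw [ckE_eq_sInf ha]
  have hlb : ∀ c ∈ {c | k ≤ multiplesCount a c}, t ≤ c :=
    fun c hc ↦ not_lt.1 fun hct ↦ (h' c hct).not_ge hc
  exact le_antisymm (csInf_le ⟨t, hlb⟩ h) (le_csInf ⟨t, h⟩ hlb)

theorem ckE_pos [NeZero n] (ha : ∀ j, 0 < a j) (hk : 1 ≤ k) : 0 < ckE a k := by
  rw [ckE_eq_sInf ha]
  have hne : {c | k ≤ multiplesCount a c}.Nonempty := by
    refine ⟨k * a 0, ?_⟩
    calc k = ⌊k * a 0 / a 0⌋₊ := by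
          rw [mul_div_cancel_right₀ _ (ha 0).ne', Nat.floor_natCast]
      _ ≤ multiplesCount a (k * a 0) :=
        single_le_sum (f := fun j ↦ ⌊k * a 0 / a j⌋₊) (fun _ _ ↦ Nat.zero_le _) (mem_univ 0)
  refine ((lt_inf'_iff univ_nonempty).2 fun j _ ↦ ha j).trans_le (le_csInf hne fun c hc ↦ ?_)
  obtain ⟨j, -, hj⟩ := exists_ne_zero_of_sum_ne_zero (s := univ)
    (f := fun j ↦ ⌊c / a j⌋₊) (by simp only [Set.mem_ofPred_eq, multiplesCount] at hc; omega)
  have : 1 ≤ c / a j := Nat.floor_pos.1 (Nat.pos_of_ne_zero hj)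
  exact (inf'_le _ (mem_univ j)).trans (by rwa [le_div_iff₀ (ha j), one_mul] at this)

theorem sum_ceil_ckE_div_lt [NeZero n] (ha : ∀ j, 0 < a j) (hk : 1 ≤ k) :
    ∑ j, ⌈ckE a k / a j⌉₊ < k + n := by
  set c := ckE a k
  set m : Fin n → ℕ := fun j ↦ ⌈c / a j⌉₊
  have hm : ∀ j, 1 ≤ m j := fun j ↦ Nat.ceil_pos.2 (div_pos (ckE_pos ha hk) (ha j))
  -- just below `c` there are still at least `m j - 1` multiples of each `a j`
  set c' := univ.sup' univ_nonempty fun j ↦ ((m j - 1 : ℕ) : ℝ) * a j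
  have hc' : c' < c := (sup'_lt_iff _).2 fun j _ ↦
    (lt_div_iff₀ (ha j)).1 (Nat.lt_ceil.1 (Nat.sub_lt (hm j) one_pos))
  have hle : ∑ j, (m j - 1) ≤ multiplesCount a c' := sum_le_sum fun j _ ↦ Nat.le_floor <|
    (le_div_iff₀ (ha j)).2 (le_sup' (fun j ↦ ((m j - 1 : ℕ) : ℝ) * a j) (mem_univ j))
  have hsum := sum_tsub_one_add_card hm
  rw [Fintype.card_fin] at hsum
  have := multiplesCount_lt_of_lt_ckE ha hk hc'
  show ∑ j, m j < k + n
  omega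

theorem ckE_div_eq {m : Fin n → ℕ} (hm : ∀ j, 0 < m j) {t : ℝ} (ht : 0 < t)
    (hk : k ≤ ∑ j, m j) (hk' : ∑ j, m j < k + n) : ckE (fun j ↦ t / m j) k = t := by
  have hm' : ∀ j, (0 : ℝ) < m j := fun j ↦ Nat.cast_pos.2 (hm j)
  refine ckE_eq_of_multiplesCount (fun j ↦ div_pos ht (hm' j)) ?_ fun c hc ↦ ?_
  · simpa [multiplesCount, div_div_cancel₀ ht.ne'] using hk
  · have hfloor : ∀ j, ⌊c / (t / m j)⌋₊ ≤ m j - 1 := fun j ↦ by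
      have : c / (t / m j) < m j := by
        rw [div_div_eq_mul_div, div_lt_iff₀ ht, mul_comm]
        exact mul_lt_mul_of_pos_left hc (hm' j)
      have := (Nat.floor_lt' (hm j).ne').2 this
      omega
    have hsum := sum_tsub_one_add_card hm
    rw [Fintype.card_fin] at hsum
    have := sum_le_sum fun j (_ : j ∈ univ) ↦ hfloor j
    simp only [multiplesCount]
    omega

end Capacity

theorem eq_of_prod_eq_of_le {ι : Type*} [Fintype ι] {f g : ι → ℝ} (hf : ∀ i, 0 < f i)
    (hfg : ∀ i, f i ≤ g i) (h : ∏ i, f i = ∏ i, g i) : f = g := by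
  by_contra hne
  obtain ⟨i, hi⟩ := Function.ne_iff.1 hne
  exact (prod_lt_prod (fun j _ ↦ hf j) (fun j _ ↦ hfg j)
    ⟨i, mem_univ i, (hfg i).lt_of_ne hi⟩).ne h

/-- The exponential function of `x` that agrees with `x` at `u` and at `u + 1`. -/
noncomputable def expInterp (u x : ℝ) : ℝ := u * ((u + 1) / u) ^ (x - u)

section ExpInterp

variable {u x : ℝ}

theorem expInterp_self : expInterp u u = u := by
  simp [expInterp]

theorem expInterp_add_one (hu : 0 < u) : expInterp u (u + 1) = u + 1 := by
  simp only [expInterp, add_sub_cancel_left, Real.rpow_one]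
  field_simp

-- convexity of `expInterp u` in `x`, in the form of Bernoulli's inequality
theorem lt_expInterp (hu : 0 < u) (hx : x < u ∨ u + 1 < x) : x < expInterp u x := by
  have hτ : (u + 1) / u = 1 + u⁻¹ := by field_simp
  rcases hx with hx | hx
  · have hp : 1 < u + 1 - x := by linarith
    have hs : -1 ≤ -(u + 1)⁻¹ := by
      rw [neg_le_neg_iff]; exact inv_le_one_of_one_le₀ (by linarith)
    have hs' : -(u + 1)⁻¹ ≠ 0 := neg_ne_zero.2 (inv_ne_zero (by positivity))
    have hB := one_add_mul_self_lt_rpow_one_add hs hs' hp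
    have hbase : 1 + -(u + 1)⁻¹ = ((u + 1) / u)⁻¹ := by field_simp; ring
    have hexp : expInterp u x = (u + 1) * (((u + 1) / u)⁻¹) ^ (u + 1 - x) := by
      rw [expInterp, Real.inv_rpow (by positivity), ← Real.rpow_neg (by positivity),
        show -(u + 1 - x) = (x - u) - 1 by ring, Real.rpow_sub_one (by positivity)]
      field_simp
    rw [hexp, ← hbase]
    have : (u + 1) * (1 + (u + 1 - x) * -(u + 1)⁻¹) = x := by field_simp; ring
    nlinarith
  · have hp : 1 < x - u := by linarith
    have hs : -1 ≤ u⁻¹ := by have := inv_pos.2 hu; linarith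
    have hB := one_add_mul_self_lt_rpow_one_add hs (inv_ne_zero hu.ne') hp
    rw [expInterp, hτ]
    have : u * (1 + (x - u) * u⁻¹) = x := by field_simp; ring
    nlinarith

theorem prod_expInterp {ι : Type*} [Fintype ι] (hu : 0 < u) (x : ι → ℝ) :
    ∏ j, expInterp u (x j) =
      u ^ Fintype.card ι * ((u + 1) / u) ^ (∑ j, x j - Fintype.card ι * u) := by
  simp only [expInterp]
  rw [prod_mul_distrib, prod_const, ← Real.rpow_sum_of_pos (by positivity), sum_sub_distrib,
    sum_const, card_univ, nsmul_eq_mul]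

theorem prod_expInterp_le_iff {ι : Type*} [Fintype ι] (hu : 0 < u) (x y : ι → ℝ) :
    ∏ j, expInterp u (x j) ≤ ∏ j, expInterp u (y j) ↔ ∑ j, x j ≤ ∑ j, y j := by
  rw [prod_expInterp hu, prod_expInterp hu, mul_le_mul_iff_right₀ (by positivity),
    Real.rpow_le_rpow_left_iff (by rw [one_lt_div hu]; linarith), sub_le_sub_iff_right]

end ExpInterp

section TwoValued

variable {q m : ℕ}

theorem natCast_lt_expInterp (h₁ : m ≠ q + 1) (h₂ : m ≠ q + 2) :
    (m : ℝ) < expInterp (q + 1) m := by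
  refine lt_expInterp (by positivity) ?_
  rcases lt_or_gt_of_ne h₁ with h | h
  · left; exact_mod_cast h
  · right; exact_mod_cast (by omega : q + 1 + 1 < m)

theorem natCast_le_expInterp : (m : ℝ) ≤ expInterp (q + 1) m := by
  by_cases h₁ : m = q + 1
  · subst h₁; push_cast; exact expInterp_self.ge
  by_cases h₂ : m = q + 2
  · subst h₂; rw [show ((q + 2 : ℕ) : ℝ) = q + 1 + 1 by push_cast; ring]
    exact (expInterp_add_one (by positivity)).ge
  exact (natCast_lt_expInterp h₁ h₂).le

end TwoValued

section ProductBound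

variable {ι : Type*} [Fintype ι] {q : ℕ} {m m' : ι → ℕ}

theorem prod_natCast_le_prod_expInterp :
    ∏ j, (m j : ℝ) ≤ ∏ j, expInterp (q + 1) (m j) :=
  prod_le_prod (fun _ _ ↦ Nat.cast_nonneg _) fun _ _ ↦ natCast_le_expInterp

theorem prod_expInterp_of_two_valued (hm : ∀ j, m j = q + 1 ∨ m j = q + 2) :
    ∏ j, expInterp (q + 1) (m j) = ∏ j, (m j : ℝ) :=
  prod_congr rfl fun j _ ↦ by
    rcases hm j with h | h <;> rw [h] <;> push_cast
    · exact expInterp_self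
    · rw [show (q : ℝ) + 2 = q + 1 + 1 by ring]; exact expInterp_add_one (by positivity)

theorem prod_le_prod_of_sum_le (hm' : ∀ j, m' j = q + 1 ∨ m' j = q + 2)
    (h : ∑ j, m j ≤ ∑ j, m' j) : ∏ j, m j ≤ ∏ j, m' j := by
  have : ∏ j, (m j : ℝ) ≤ ∏ j, (m' j : ℝ) := calc
    _ ≤ ∏ j, expInterp (q + 1) (m j) := prod_natCast_le_prod_expInterp
    _ ≤ ∏ j, expInterp (q + 1) (m' j) :=
      (prod_expInterp_le_iff (by positivity) _ _).2 (by exact_mod_cast h)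
    _ = ∏ j, (m' j : ℝ) := prod_expInterp_of_two_valued hm'
  exact_mod_cast this

theorem two_valued_of_prod_eq_prod (hm' : ∀ j, m' j = q + 1 ∨ m' j = q + 2)
    (h : ∑ j, m j ≤ ∑ j, m' j) (hprod : ∏ j, m j = ∏ j, m' j) :
    (∀ j, m j = q + 1 ∨ m j = q + 2) ∧ ∑ j, m j = ∑ j, m' j := by
  have hprod' : ∏ j, (m j : ℝ) = ∏ j, (m' j : ℝ) := by exact_mod_cast hprod
  have hle := (prod_expInterp_le_iff (u := (q : ℝ) + 1) (by positivity) (fun j ↦ (m j : ℝ))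
    (fun j ↦ (m' j : ℝ))).2 (by exact_mod_cast h)
  rw [prod_expInterp_of_two_valued hm'] at hle
  have htight : ∏ j, (m j : ℝ) = ∏ j, expInterp (q + 1) (m j) :=
    prod_natCast_le_prod_expInterp.antisymm (hle.trans hprod'.ge)
  have hpos : ∀ j, 0 < m j := fun j ↦ Nat.pos_of_ne_zero fun h0 ↦ by
    have : ∏ j, m' j ≠ 0 := prod_ne_zero_iff.2 fun j _ ↦ by rcases hm' j with h | h <;> omega
    exact this (hprod ▸ prod_eq_zero (mem_univ j) h0)
  refine ⟨fun j ↦ ?_, ?_⟩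
  · have := congrFun (eq_of_prod_eq_of_le (fun j ↦ Nat.cast_pos.2 (hpos j))
      (fun _ ↦ natCast_le_expInterp) htight) j
    by_contra! hj
    exact (natCast_lt_expInterp hj.1 hj.2).ne this
  · have := (prod_expInterp_le_iff (u := (q : ℝ) + 1) (by positivity) (fun j ↦ (m' j : ℝ))
      (fun j ↦ (m j : ℝ))).1 (by rw [prod_expInterp_of_two_valued hm', ← htight, hprod'])
    exact h.antisymm (by exact_mod_cast this)

end ProductBound

theorem eq_of_antitone_of_sum_eq {ι : Type*} [Fintype ι] [LinearOrder ι] {u : ℕ}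
    {m m' : ι → ℕ} (hm : Antitone m) (hm' : Antitone m') (hv : ∀ j, m j = u ∨ m j = u + 1)
    (hv' : ∀ j, m' j = u ∨ m' j = u + 1) (h : ∑ j, m j = ∑ j, m' j) : m = m' := by
  by_contra hne
  obtain ⟨i, hi⟩ := Function.ne_iff.1 hne
  wlog hmi : m i = u + 1 generalizing m m'
  · exact this hm' hm hv' hv h.symm (Ne.symm hne) (Ne.symm hi)
      (by rcases hv i with h | h <;> rcases hv' i with h' | h' <;> omega)
  -- `m` jumps down no earlier than `m'`, so it dominates `m'` everywhere
  have hle : ∀ j, m' j ≤ m j := fun j ↦ (le_total j i).elim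
    (fun hji ↦ by have := hm hji; rcases hv' j with h | h <;> omega)
    (fun hij ↦ by
      have := hm' hij
      rcases hv j with h | h <;> rcases hv' i with h' | h' <;> omega)
  exact (sum_lt_sum (fun j _ ↦ hle j) ⟨i, mem_univ i, by have := hle i; omega⟩).ne' h

theorem ckE_pow_div_prod_eq_prod_div {n : ℕ} (b : Fin n → ℝ) (k : ℕ) :
    ckE b k ^ n / ∏ j, b j = ∏ j, ckE b k / b j := by
  rw [prod_div_distrib, prod_const, card_univ, Fintype.card_fin]

section CapacityBound

variable {n k q : ℕ} [NeZero n] {b : Fin n → ℝ} {m : Fin n → ℕ}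

theorem ckE_pow_div_prod_le (hb : ∀ j, 0 < b j) (hk : 1 ≤ k)
    (hm : ∀ j, m j = q + 1 ∨ m j = q + 2) (hsum : ∑ j, m j + 1 = k + n) :
    ckE b k ^ n / ∏ j, b j ≤ ∏ j, (m j : ℝ) := by
  have hceil := sum_ceil_ckE_div_lt hb hk
  rw [ckE_pow_div_prod_eq_prod_div]
  calc ∏ j, ckE b k / b j ≤ ∏ j, (⌈ckE b k / b j⌉₊ : ℝ) :=
        prod_le_prod (fun j _ ↦ (div_pos (ckE_pos hb hk) (hb j)).le) fun j _ ↦ Nat.le_ceil _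
    _ ≤ ∏ j, (m j : ℝ) := by exact_mod_cast prod_le_prod_of_sum_le hm (by omega)

theorem eq_div_of_ckE_pow_div_prod_eq (hb : ∀ j, 0 < b j) (hk : 1 ≤ k) (hmono : Monotone b)
    (hm : ∀ j, m j = q + 1 ∨ m j = q + 2) (hanti : Antitone m) (hsum : ∑ j, m j + 1 = k + n)
    (h : ckE b k ^ n / ∏ j, b j = ∏ j, (m j : ℝ)) : b = fun j ↦ ckE b k / m j := by
  set c := ckE b k
  have hc := ckE_pos hb hk
  set M : Fin n → ℕ := fun j ↦ ⌈c / b j⌉₊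
  have hM : ∑ j, M j ≤ ∑ j, m j := by
    have : ∑ j, M j < k + n := sum_ceil_ckE_div_lt hb hk
    omega
  have hle₁ : ∀ j, c / b j ≤ M j := fun j ↦ Nat.le_ceil _
  have hle₂ : ∏ j, (M j : ℝ) ≤ ∏ j, (m j : ℝ) := by
    exact_mod_cast prod_le_prod_of_sum_le hm hM
  rw [ckE_pow_div_prod_eq_prod_div] at h
  have htight : ∏ j, c / b j = ∏ j, (M j : ℝ) :=
    (prod_le_prod (fun j _ ↦ (div_pos hc (hb j)).le) fun j _ ↦ hle₁ j).antisymm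
      (hle₂.trans h.ge)
  have hcM := eq_of_prod_eq_of_le (fun j ↦ div_pos hc (hb j)) hle₁ htight
  obtain ⟨hMv, hMsum⟩ :=
    two_valued_of_prod_eq_prod hm hM (by exact_mod_cast htight.symm.trans h)
  have hManti : Antitone M := fun i j hij ↦
    Nat.ceil_mono (div_le_div_of_nonneg_left hc.le (hb i) (hmono hij))
  have hMm : M = m := eq_of_antitone_of_sum_eq (u := q + 1) hManti hanti
    (fun j ↦ by rcases hMv j with h | h <;> omega) (fun j ↦ by rcases hm j with h | h <;> omega)
    hMsum
  funext j
  rw [← hMm, ← congrFun hcM j, div_div_cancel₀ hc.ne']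

theorem ckE_pow_div_prod_div (hm : ∀ j, m j = q + 1 ∨ m j = q + 2)
    (hsum : ∑ j, m j + 1 = k + n) {t : ℝ} (ht : 0 < t) :
    ckE (fun j ↦ t / m j) k ^ n / ∏ j, t / m j = ∏ j, (m j : ℝ) := by
  have hm0 : ∀ j, 0 < m j := fun j ↦ by rcases hm j with h | h <;> omega
  have : 0 < n := Nat.pos_of_neZero n
  rw [ckE_pow_div_prod_eq_prod_div, ckE_div_eq hm0 ht (by omega) (by omega)]
  exact prod_congr rfl fun j _ ↦ div_div_cancel₀ ht.ne'

end CapacityBound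

-- the values of `⌈c_k / a_j⌉₊` at a maximiser, with `s = r - 1`
def extremalMultiplicity {n : ℕ} (q s : ℕ) (j : Fin n) : ℕ :=
  if (j : ℕ) < s then q + 2 else q + 1

section ExtremalMultiplicity

variable {n q s : ℕ}

theorem extremalMultiplicity_of_lt {j : Fin n} (h : (j : ℕ) < s) :
    extremalMultiplicity q s j = q + 2 :=
  if_pos h

theorem extremalMultiplicity_of_le {j : Fin n} (h : s ≤ (j : ℕ)) :
    extremalMultiplicity q s j = q + 1 :=
  if_neg h.not_gt

theorem extremalMultiplicity_eq_or (j : Fin n) :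
    extremalMultiplicity q s j = q + 1 ∨ extremalMultiplicity q s j = q + 2 := by
  unfold extremalMultiplicity; split_ifs <;> simp

theorem antitone_extremalMultiplicity : Antitone (extremalMultiplicity (n := n) q s) :=
  fun i j hij ↦ by
    unfold extremalMultiplicity
    have : (i : ℕ) ≤ j := hij
    split_ifs <;> omega

theorem sum_extremalMultiplicity :
    ∑ j : Fin n, extremalMultiplicity q s j = (q + 1) * n + min n s := by
  have : ∀ j : Fin n, extremalMultiplicity q s j = (q + 1) + if (j : ℕ) < s then 1 else 0 :=
    fun j ↦ by unfold extremalMultiplicity; split_ifs <;> rfl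
  simp only [this, sum_add_distrib, sum_const, card_univ, Fintype.card_fin, smul_eq_mul,
    sum_boole, Fin.card_filter_val_lt, Nat.cast_id]
  ring

end ExtremalMultiplicity

theorem div_rpow_le_div_rpow_iff {n : ℕ} (hn : n ≠ 0) {c d x y : ℝ} (hc : 0 ≤ c) (hd : 0 ≤ d)
    (hx : 0 < x) (hy : 0 < y) :
    c / x ^ ((1 : ℝ) / n) ≤ d / y ^ ((1 : ℝ) / n) ↔ c ^ n / x ≤ d ^ n / y := by
  have key : ∀ c x : ℝ, 0 ≤ c → 0 < x → c / x ^ ((1 : ℝ) / n) = (c ^ n / x) ^ ((1 : ℝ) / n) :=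
    fun c x hc hx ↦ by rw [Real.div_rpow (by positivity) hx.le, one_div,
      Real.pow_rpow_inv_natCast hc hn]
  rw [key c x hc hx, key d y hd hy, Real.rpow_le_rpow_iff (by positivity) (by positivity)
    (by positivity)]

theorem ckE_div_rpow_le_ckE_div_rpow_iff {n k : ℕ} [NeZero n] (hk : 1 ≤ k)
    {b b' : Fin n → ℝ} (hb : ∀ i, 0 < b i) (hb' : ∀ i, 0 < b' i) :
    ckE b k / (∏ i, b i) ^ ((1 : ℝ) / n) ≤ ckE b' k / (∏ i, b' i) ^ ((1 : ℝ) / n) ↔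
      ckE b k ^ n / ∏ i, b i ≤ ckE b' k ^ n / ∏ i, b' i :=
  div_rpow_le_div_rpow_iff (NeZero.ne n) (ckE_pos hb hk).le (ckE_pos hb' hk).le
    (prod_pos fun i _ ↦ hb i) (prod_pos fun i _ ↦ hb' i)

theorem exists_eq_div_extremalMultiplicity_iff {n q r : ℕ} (hr1 : 1 ≤ r) (hrn : r ≤ n)
    {a : Fin n → ℝ} (ha : ∀ i, 0 < a i) :
    (∃ t, 0 < t ∧ a = fun j ↦ t / (extremalMultiplicity q (r - 1) j : ℝ)) ↔
      ∀ i : Fin n,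
        ((i : ℕ) + 2 ≤ r → a i / a ⟨n - 1, by omega⟩ = ((q : ℝ) + 1) / ((q : ℝ) + 2)) ∧
        (r ≤ (i : ℕ) + 1 → a i = a ⟨n - 1, by omega⟩) := by
  have hlast : extremalMultiplicity q (r - 1) (⟨n - 1, by omega⟩ : Fin n) = q + 1 :=
    extremalMultiplicity_of_le (by simp only; omega)
  constructor
  · rintro ⟨t, ht, rfl⟩ i
    dsimp only
    rw [hlast]
    refine ⟨fun hi ↦ ?_, fun hi ↦ ?_⟩
    · rw [extremalMultiplicity_of_lt (by omega)]
      push_cast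
      field_simp
    · rw [extremalMultiplicity_of_le (by omega)]
  · intro h
    refine ⟨(q + 1) * a ⟨n - 1, by omega⟩, mul_pos (by positivity) (ha _),
      funext fun i ↦ ?_⟩
    by_cases hi : (i : ℕ) + 2 ≤ r
    · have := (h i).1 hi
      rw [div_eq_div_iff (ha _).ne' (by positivity)] at this
      rw [extremalMultiplicity_of_lt (by omega)]
      push_cast
      field_simp
      linarith
    · rw [(h i).2 (by omega), extremalMultiplicity_of_le (by omega)]
      push_cast
      field_simp

/-- The `k`-th capacity ratio attains its global maximum over ellipsoids precisely at the
tuples (normalized to be ordered; this accounts for permutations, and the condition is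
scale-invariant) with `aᵢ/aₙ = (q+1)/(q+2)` for `1 ≤ i ≤ r-1` and `aᵢ = aₙ` for `r ≤ i ≤ n`,
where `k = qn + r` with `q ≥ 0` and `1 ≤ r ≤ n`. -/
theorem stmt2 (n k q r : ℕ) (hr1 : 1 ≤ r) (hrn : r ≤ n)
    (hqr : k = q * n + r)
    (a : Fin n → ℝ) (hapos : ∀ i, 0 < a i) (hamono : Monotone a) :
    (∀ b : Fin n → ℝ, (∀ i, 0 < b i) → Monotone b →
        ckE b k / (∏ i, b i) ^ ((1:ℝ)/(n:ℝ)) ≤ ckE a k / (∏ i, a i) ^ ((1:ℝ)/(n:ℝ)))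
      ↔ (∀ i : Fin n,
          ((i : ℕ) + 2 ≤ r → a i / a ⟨n - 1, by omega⟩ = ((q : ℝ) + 1)/((q : ℝ) + 2)) ∧
          (r ≤ (i : ℕ) + 1 → a i = a ⟨n - 1, by omega⟩)) := by
  have : NeZero n := ⟨by omega⟩
  have hk : 1 ≤ k := by omega
  set m := extremalMultiplicity (n := n) q (r - 1)
  have hm : ∀ j, m j = q + 1 ∨ m j = q + 2 := extremalMultiplicity_eq_or
  have hsum : ∑ j, m j + 1 = k + n := by
    rw [sum_extremalMultiplicity, min_eq_right (by omega), hqr]; ring_nf; omega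
  rw [← exists_eq_div_extremalMultiplicity_iff hr1 hrn hapos]
  constructor
  · intro hmax
    have hm_pos : ∀ j, (0 : ℝ) < 1 / m j := fun j ↦ by
      rcases hm j with h | h <;> rw [h] <;> positivity
    have hm_mono : Monotone fun j ↦ (1 : ℝ) / m j := fun i j hij ↦
      div_le_div_of_nonneg_left zero_le_one (by simpa using hm_pos j)
        (by exact_mod_cast antitone_extremalMultiplicity hij)
    have hge := (ckE_div_rpow_le_ckE_div_rpow_iff hk hm_pos hapos).1 (hmax _ hm_pos hm_mono)
    rw [ckE_pow_div_prod_div hm hsum one_pos] at hge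
    exact ⟨ckE a k, ckE_pos hapos hk, eq_div_of_ckE_pow_div_prod_eq hapos hk hamono hm
      antitone_extremalMultiplicity hsum ((ckE_pow_div_prod_le hapos hk hm hsum).antisymm hge)⟩
  · rintro ⟨t, ht, rfl⟩ b hb -
    rw [ckE_div_rpow_le_ckE_div_rpow_iff hk hb hapos, ckE_pow_div_prod_div hm hsum ht]
    exact ckE_pow_div_prod_le hb hk hm hsum
end

section
/- Conversely, let $\bm a$ be a tuple of positive reals and suppose there exist positive integers $r_1,\dots,r_n$ with $r_1a_1=\dots=r_na_n$ and $k=r_1+\dots+r_n-n+1$. Then $\bm a$ is a local maximizer of the function $\bm b\mapsto c_k(E(\bm b))/(b_1\cdots b_n)^{1/n}$, where $c_k(E(\bm b))$ is the $k$-th smallest positive integer multiple (with multiplicity) of the entries of $\bm b$. -/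
open Filter Topology Finset

namespace EllipsoidCapacity

variable {n : ℕ}

-- `ckE b k = sInf {c | k ≤ (multiplesLE b c).ncard}` definitionally. The set is finite only when
-- all `b j > 0`; otherwise its `ncard` is the junk value `0`.
def multiplesLE (b : Fin n → ℝ) (c : ℝ) : Set (ℕ × Fin n) :=
  {p | 1 ≤ p.1 ∧ (p.1 : ℝ) * b p.2 ≤ c}

def indexBox (s : Fin n → ℕ) : Finset (ℕ × Fin n) :=
  univ.biUnion fun j => Icc 1 (s j) ×ˢ {j}

theorem mem_indexBox {s : Fin n → ℕ} {p : ℕ × Fin n} :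
    p ∈ indexBox s ↔ 1 ≤ p.1 ∧ p.1 ≤ s p.2 := by
  obtain ⟨m, j⟩ := p
  simp [indexBox, and_comm]

theorem card_indexBox (s : Fin n → ℕ) : (indexBox s).card = ∑ j, s j := by
  rw [indexBox, card_biUnion]
  · simp
  · intro i _ j _ hij
    exact disjoint_product.mpr (Or.inr (disjoint_singleton.mpr hij))

theorem multiplesLE_subset_indexBox {b : Fin n → ℝ} (hb : ∀ j, 0 < b j) (c : ℝ) :
    multiplesLE b c ⊆ indexBox fun j => ⌊c / b j⌋₊ := by
  rintro ⟨m, j⟩ ⟨hm, hmc⟩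
  exact mem_indexBox.mpr ⟨hm, Nat.le_floor ((le_div_iff₀ (hb j)).mpr hmc)⟩

theorem sum_le_ncard_multiplesLE {b : Fin n → ℝ} (hb : ∀ j, 0 < b j) {c : ℝ} {s : Fin n → ℕ}
    (h : ∀ j, (s j : ℝ) * b j ≤ c) : ∑ j, s j ≤ (multiplesLE b c).ncard := by
  rw [← card_indexBox, ← Set.ncard_coe_finset]
  refine Set.ncard_le_ncard ?_ ((finite_toSet _).subset (multiplesLE_subset_indexBox hb c))
  rintro ⟨m, j⟩ hp
  obtain ⟨hm, hms⟩ := mem_indexBox.mp hp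
  exact ⟨hm, (mul_le_mul_of_nonneg_right (by exact_mod_cast hms) (hb j).le).trans (h j)⟩

theorem ncard_multiplesLE_le_sum {b : Fin n → ℝ} {c : ℝ} {s : Fin n → ℕ}
    (h : ∀ (m : ℕ) j, 1 ≤ m → (m : ℝ) * b j ≤ c → m ≤ s j) :
    (multiplesLE b c).ncard ≤ ∑ j, s j := by
  rw [← card_indexBox, ← Set.ncard_coe_finset]
  refine Set.ncard_le_ncard ?_ (finite_toSet _)
  rintro ⟨m, j⟩ ⟨hm, hmc⟩
  exact mem_indexBox.mpr ⟨hm, h m j hm hmc⟩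

theorem ckE_le_of_le_ncard {b : Fin n → ℝ} (hb : ∀ j, 0 ≤ b j) {k : ℕ} (hk : 0 < k) {c : ℝ}
    (h : k ≤ (multiplesLE b c).ncard) : ckE b k ≤ c := by
  refine csInf_le ⟨0, fun c' hc' => ?_⟩ h
  by_contra! hneg
  have hempty : multiplesLE b c' = ∅ := by
    refine Set.eq_empty_of_forall_notMem fun p hp => ?_
    have : 0 ≤ (p.1 : ℝ) * b p.2 := mul_nonneg p.1.cast_nonneg (hb p.2)
    linarith [hp.2]
  have : k ≤ (multiplesLE b c').ncard := hc'
  rw [hempty, Set.ncard_empty] at this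
  omega

theorem le_ckE_of_forall_lt {b : Fin n → ℝ} {k : ℕ} {c₀ t : ℝ}
    (h₀ : k ≤ (multiplesLE b c₀).ncard) (h : ∀ c < t, (multiplesLE b c).ncard < k) :
    t ≤ ckE b k :=
  le_csInf ⟨c₀, h₀⟩ fun c hc => not_lt.mp fun hct => (h c hct).not_ge hc

noncomputable def geomMean (x : Fin n → ℝ) : ℝ :=
  (∏ i, x i) ^ ((1 : ℝ) / n)

theorem geomMean_pos {x : Fin n → ℝ} (hx : ∀ i, 0 < x i) : 0 < geomMean x :=
  Real.rpow_pos_of_pos (prod_pos fun i _ => hx i) _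

theorem geomMean_mul {x y : Fin n → ℝ} (hx : ∀ i, 0 ≤ x i) (hy : ∀ i, 0 ≤ y i) :
    geomMean (x * y) = geomMean x * geomMean y := by
  simp only [geomMean, Pi.mul_apply, prod_mul_distrib]
  exact Real.mul_rpow (prod_nonneg fun i _ => hx i) (prod_nonneg fun i _ => hy i)

theorem geomMean_eq_mul_geomMean_div {a b : Fin n → ℝ} (ha : ∀ i, 0 < a i)
    (hb : ∀ i, 0 ≤ b i) : geomMean b = geomMean a * geomMean (b / a) := by
  rw [← geomMean_mul (y := b / a) (fun i => (ha i).le) fun i => div_nonneg (hb i) (ha i).le]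
  congr 1
  ext i
  simp [mul_div_cancel₀ _ (ha i).ne']

theorem le_geomMean_of_forall_le (hn : n ≠ 0) {x : Fin n → ℝ} {m : ℝ} (hm : 0 ≤ m)
    (h : ∀ i, m ≤ x i) : m ≤ geomMean x := by
  calc m = (m ^ n) ^ ((1 : ℝ) / n) := by rw [one_div, Real.pow_rpow_inv_natCast hm hn]
    _ ≤ geomMean x := by
      refine Real.rpow_le_rpow (pow_nonneg hm n) ?_ (by positivity)
      simpa using prod_le_prod (s := univ) (fun i _ => hm) fun i _ => h i

theorem exists_le_geomMean (hn : n ≠ 0) {x : Fin n → ℝ} (hx : ∀ i, 0 ≤ x i) :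
    ∃ i, x i ≤ geomMean x := by
  have : Nonempty (Fin n) := ⟨⟨0, Nat.pos_of_ne_zero hn⟩⟩
  obtain ⟨i, hi⟩ := Finite.exists_min x
  exact ⟨i, le_geomMean_of_forall_le hn (hx i) hi⟩

theorem eventually_forall_div_mem_Ioo {a : Fin n → ℝ} (ha : ∀ i, a i ≠ 0) {ε : ℝ} (hε : 0 < ε) :
    ∀ᶠ b in 𝓝 a, ∀ i, b i / a i ∈ Set.Ioo (1 - ε) (1 + ε) := by
  refine eventually_all.mpr fun i => ?_
  have : Tendsto (fun b : Fin n → ℝ => b i / a i) (𝓝 a) (𝓝 1) := by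
    simpa [div_self (ha i)] using ((continuous_apply i).div_const (a i)).tendsto a
  exact this (Ioo_mem_nhds (by linarith) (by linarith))

theorem sum_sub_one_add_card {r : Fin n → ℕ} (hr : ∀ j, 1 ≤ r j) :
    ∑ j, (r j - 1) + n = ∑ j, r j := by
  rw [sum_tsub_distrib _ fun j _ => hr j]
  have : n ≤ ∑ j, r j := by simpa using sum_le_sum (s := univ) fun j _ => hr j
  simp only [sum_const, card_univ, Fintype.card_fin, smul_eq_mul, mul_one]
  omega

theorem exists_pos_forall_two_mul_le_one (r : Fin n → ℕ) :
    ∃ ε > 0, ∀ j, 2 * (r j : ℝ) * ε ≤ 1 := by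
  refine ⟨1 / (2 * (∑ j, (r j : ℝ) + 1)), by positivity, fun j => ?_⟩
  have : (r j : ℝ) ≤ ∑ j, (r j : ℝ) := single_le_sum (fun i _ => (r i).cast_nonneg) (mem_univ j)
  rw [mul_one_div, div_le_one (by positivity)]
  linarith

section Resonant

variable {a : Fin n → ℝ} {r : Fin n → ℕ} {k : ℕ}

theorem le_ckE_of_mul_eq (hn : n ≠ 0) (ha : ∀ j, 0 < a j) (hr : ∀ j, 1 ≤ r j) {T : ℝ}
    (hT : ∀ j, (r j : ℝ) * a j = T) (hk : k + n = ∑ j, r j + 1) : T ≤ ckE a k := by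
  have hsum := sum_sub_one_add_card hr
  refine le_ckE_of_forall_lt (c₀ := T) ?_ fun c hc => ?_
  · exact le_trans (by omega) (sum_le_ncard_multiplesLE ha fun j => (hT j).le)
  · have : (multiplesLE a c).ncard ≤ ∑ j, (r j - 1) := by
      refine ncard_multiplesLE_le_sum fun m j _ hm => Nat.le_sub_one_of_lt ?_
      have : (m : ℝ) * a j < r j * a j := by linarith [hT j]
      exact_mod_cast lt_of_mul_lt_mul_right this (ha j).le
    omega

theorem ckE_le_of_mul_le {b : Fin n → ℝ} (hb : ∀ j, 0 < b j) (hr : ∀ j, 1 ≤ r j)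
    (hk : k + n = ∑ j, r j + 1) {t : ℝ} (j₀ : Fin n) (h₀ : (r j₀ : ℝ) * b j₀ ≤ t)
    (h : ∀ j, ((r j : ℝ) - 1) * b j ≤ t) : ckE b k ≤ t := by
  have hsum := sum_sub_one_add_card hr
  set s : Fin n → ℕ := fun j => r j - 1 + if j = j₀ then 1 else 0
  have hs : ∑ j, s j = k := by
    simp only [s, sum_add_distrib, sum_ite_eq', mem_univ, if_true]
    omega
  refine ckE_le_of_le_ncard (fun j => (hb j).le) (by omega) (hs ▸ ?_)
  refine sum_le_ncard_multiplesLE hb fun j => ?_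
  by_cases hj : j = j₀
  · subst hj
    simpa [s, Nat.sub_add_cancel (hr j)] using h₀
  · simpa [s, hj, Nat.cast_sub (hr j)] using h j

theorem ckE_le_mul_geomMean_div (hn : n ≠ 0) (ha : ∀ j, 0 < a j) (hr : ∀ j, 1 ≤ r j) {T : ℝ}
    (hT : ∀ j, (r j : ℝ) * a j = T) (hk : k + n = ∑ j, r j + 1) {ε : ℝ} (hε : 0 ≤ ε)
    (hεr : ∀ j, 2 * r j * ε ≤ 1) {b : Fin n → ℝ} (hb : ∀ j, 0 < b j)
    (hba : ∀ j, b j / a j ∈ Set.Icc (1 - ε) (1 + ε)) :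
    ckE b k ≤ T * geomMean (b / a) := by
  set G := geomMean (b / a)
  let i₀ : Fin n := ⟨0, Nat.pos_of_ne_zero hn⟩
  have hr' : ∀ j, (1 : ℝ) ≤ r j := fun j => by exact_mod_cast hr j
  have hT0 : 0 ≤ T := hT i₀ ▸ mul_nonneg (Nat.cast_nonneg _) (ha i₀).le
  have hG : 1 - ε ≤ G := by
    have := hεr i₀
    exact le_geomMean_of_forall_le hn (by nlinarith [hr' i₀]) fun j => (hba j).1
  obtain ⟨j₀, hj₀⟩ := exists_le_geomMean hn (x := b / a) fun j => (div_pos (hb j) (ha j)).le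
  refine ckE_le_of_mul_le hb hr hk j₀ ?_ fun j => ?_
  · calc (r j₀ : ℝ) * b j₀ = T * (b j₀ / a j₀) := by
          rw [← hT j₀]; field_simp [(ha j₀).ne']
      _ ≤ T * G := mul_le_mul_of_nonneg_left hj₀ hT0
  · have hεj := hεr j
    calc ((r j : ℝ) - 1) * b j = (r j - 1) * (b j / a j) * a j := by
          rw [mul_assoc, div_mul_cancel₀ _ (ha j).ne']
      _ ≤ (r j - 1) * (1 + ε) * a j := by
          have := hr' j
          have := ha j
          gcongr
          exact (hba j).2
      _ ≤ r j * (1 - ε) * a j := mul_le_mul_of_nonneg_right (by nlinarith) (ha j).le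
      _ ≤ r j * G * a j := by
          have := ha j
          gcongr
      _ = T * G := by rw [← hT j]; ring

end Resonant

end EllipsoidCapacity

open EllipsoidCapacity in
/-- Conversely: if there are positive integers `r₁,…,rₙ` with `r₁a₁ = … = rₙaₙ` and
`k = r₁ + … + rₙ - n + 1`, then `a` is a local maximizer (on the positive orthant) of the
`k`-th ellipsoid capacity ratio. -/
theorem stmt4 (n k : ℕ) (hn : 1 ≤ n)
    (a : Fin n → ℝ) (hapos : ∀ i, 0 < a i)
    (r : Fin n → ℕ) (hrpos : ∀ i, 1 ≤ r i)
    (heq : ∀ i j : Fin n, (r i : ℝ) * a i = (r j : ℝ) * a j)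
    (hk : k + n = (∑ i, r i) + 1) :
    IsLocalMaxOn (fun b : Fin n → ℝ => ckE b k / (∏ i, b i) ^ ((1:ℝ)/(n:ℝ)))
      {b | ∀ i, 0 < b i} a := by
  have hn₀ : n ≠ 0 := by omega
  obtain ⟨T, hT⟩ : ∃ T : ℝ, ∀ j, (r j : ℝ) * a j = T := ⟨_, fun j => heq j ⟨0, hn⟩⟩
  obtain ⟨ε, hε, hεr⟩ := exists_pos_forall_two_mul_le_one r
  change IsLocalMaxOn (fun b => ckE b k / geomMean b) _ a
  filter_upwards [nhdsWithin_le_nhds (eventually_forall_div_mem_Ioo (fun j => (hapos j).ne') hε),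
    self_mem_nhdsWithin] with b hba hb
  have hG : 0 < geomMean (b / a) := geomMean_pos fun j => div_pos (hb j) (hapos j)
  calc ckE b k / geomMean b ≤ T * geomMean (b / a) / geomMean b := by
        refine div_le_div_of_nonneg_right ?_ (geomMean_pos hb).le
        exact ckE_le_mul_geomMean_div hn₀ hapos hrpos hT hk hε.le hεr hb
          fun j => Set.Ioo_subset_Icc_self (hba j)
    _ = T / geomMean a := by
        rw [geomMean_eq_mul_geomMean_div hapos fun j => (hb j).le, mul_div_mul_right _ _ hG.ne']
    _ ≤ ckE a k / geomMean a :=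
        div_le_div_of_nonneg_right (le_ckE_of_mul_eq hn₀ hapos hrpos hT hk)
          (geomMean_pos hapos).le
end

section
/- For every integer $k\ge 3$, $k/\sqrt{2} > \sqrt{\lceil k/2\rceil\,\lceil (k+1)/2\rceil}$, while for $k=2$ equality $2/\sqrt2=\sqrt{1\cdot 2}$ holds. In other words, for $k\ge3$ the maximal polydisk capacity ratio strictly exceeds the maximal ellipsoid capacity ratio in dimension 4. -/
lemma ceil_half_odd (m : ℕ) : ⌈((m : ℝ) + 1/2)⌉₊ = m + 1 := by
  rw [Nat.ceil_eq_iff (by omega)]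
  constructor
  · push_cast; linarith
  · push_cast; linarith

lemma sqrt_lt_div_sqrt2 {x y : ℝ} (hx : 0 ≤ x) (h : 2 * x < y ^ 2) (hy : 0 ≤ y) :
    Real.sqrt x < y / Real.sqrt 2 := by
  have h2 : Real.sqrt 2 > 0 := by positivity
  rw [lt_div_iff₀ h2]
  have : Real.sqrt x * Real.sqrt 2 = Real.sqrt (2 * x) := by
    rw [Real.sqrt_mul (by norm_num), mul_comm]
  rw [this]
  calc Real.sqrt (2 * x) < Real.sqrt (y ^ 2) := by
        apply Real.sqrt_lt_sqrt (by linarith) h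
    _ = y := Real.sqrt_sq hy

/-- For every `k ≥ 3`, `k/√2 > √(⌈k/2⌉·⌈(k+1)/2⌉)` (the maximal polydisk capacity ratio
strictly exceeds the maximal ellipsoid capacity ratio in dimension 4), while for `k = 2`
one has the equality `2/√2 = √(1·2)`. -/
theorem stmt6 :
    (∀ k : ℕ, 3 ≤ k →
      Real.sqrt ((⌈(k : ℝ)/2⌉₊ : ℝ) * (⌈((k : ℝ) + 1)/2⌉₊ : ℝ)) < (k : ℝ) / Real.sqrt 2) ∧
    (2 / Real.sqrt 2 = Real.sqrt (1 * 2)) := by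
  constructor
  · intro k hk
    rcases Nat.even_or_odd k with ⟨m, hm⟩ | ⟨m, hm⟩
    · have hm2 : 2 ≤ m := by omega
      subst hm
      have h1 : ((m + m : ℕ) : ℝ) / 2 = (m : ℝ) := by push_cast; ring
      have h2 : (((m + m : ℕ) : ℝ) + 1) / 2 = (m : ℝ) + 1/2 := by push_cast; ring
      rw [h1, h2, Nat.ceil_natCast, ceil_half_odd]
      apply sqrt_lt_div_sqrt2 (by positivity) _ (by positivity)
      push_cast
      have : (2 : ℝ) ≤ m := by exact_mod_cast hm2
      nlinarith
    · have hm1 : 1 ≤ m := by omega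
      subst hm
      have h1 : ((2 * m + 1 : ℕ) : ℝ) / 2 = (m : ℝ) + 1/2 := by push_cast; ring
      have h2 : (((2 * m + 1 : ℕ) : ℝ) + 1) / 2 = ((m + 1 : ℕ) : ℝ) := by push_cast; ring
      rw [h1, h2, ceil_half_odd, Nat.ceil_natCast]
      apply sqrt_lt_div_sqrt2 (by positivity) _ (by positivity)
      push_cast
      have : (1 : ℝ) ≤ m := by exact_mod_cast hm1
      nlinarith
  · rw [show (1:ℝ) * 2 = 2 by ring]; exact Real.div_sqrt
end

section
/- The 4-dimensional ellipsoid maximizing the $k$-th capacity ratio is $E(\lceil k/2\rceil,\lceil(k+1)/2\rceil)$, and its ratio equals $\sqrt{\lceil k/2\rceil\,\lceil(k+1)/2\rceil}$. Precisely: for all $a_1,a_2>0$, the $k$-th smallest element with multiplicity of $\{ma_1,ma_2:m\ge1\}$ divided by $\sqrt{a_1a_2}$ is at most $\sqrt{\lceil k/2\rceil\lceil(k+1)/2\rceil}$, with equality for $(a_1,a_2)=(\lceil k/2\rceil,\lceil(k+1)/2\rceil)$. -/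
lemma cardT (a₁ a₂ c : ℝ) (h₁ : 0 < a₁) (h₂ : 0 < a₂) (hc : 0 ≤ c) :
    {p : ℕ × Fin 2 | 1 ≤ p.1 ∧ (p.1 : ℝ) * ![a₁, a₂] p.2 ≤ c}.ncard
      = ⌊c/a₁⌋₊ + ⌊c/a₂⌋₊ := by
  have hmem : ∀ (a : ℝ), 0 < a → ∀ m : ℕ, ((m:ℝ) * a ≤ c ↔ m ≤ ⌊c/a⌋₊) := by
    intro a ha m
    rw [Nat.le_floor_iff (div_nonneg hc ha.le), le_div_iff₀ ha]
  have hset : {p : ℕ × Fin 2 | 1 ≤ p.1 ∧ (p.1 : ℝ) * ![a₁, a₂] p.2 ≤ c}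
      = ↑((Finset.Icc 1 ⌊c/a₁⌋₊ ×ˢ ({0} : Finset (Fin 2))) ∪
          (Finset.Icc 1 ⌊c/a₂⌋₊ ×ˢ ({1} : Finset (Fin 2)))) := by
    ext ⟨m, j⟩
    fin_cases j <;>
      simp [Finset.mem_product, hmem a₁ h₁, hmem a₂ h₂, and_comm]
  rw [hset, Set.ncard_coe_finset]
  rw [Finset.card_union_of_disjoint, Finset.card_product, Finset.card_product]
  · simp
  · rw [Finset.disjoint_left]
    rintro ⟨m, j⟩ hj hj2
    simp only [Finset.mem_product, Finset.mem_singleton] at hj hj2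
    rw [hj.2] at hj2
    exact absurd hj2.2 (by decide)

lemma nat_prod (a b p q : ℕ) (hsum : a + b + 2 ≤ p + q) (h1 : q ≤ p + 1)
    (h2 : p ≤ q + 1) : (a + 1) * (b + 1) ≤ p * q := by
  have h4 : 4 * ((a + 1) * (b + 1)) ≤ 4 * (p * q) + 1 := by
    zify at *
    nlinarith [sq_nonneg ((a:ℤ) - b), sq_nonneg ((p:ℤ) - q),
      mul_nonneg (by linarith : (0:ℤ) ≤ (q:ℤ) + 1 - p) (by linarith : (0:ℤ) ≤ (p:ℤ) + 1 - q)]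
  omega

lemma key (x y : ℝ) (p q : ℕ) (hx : 0 ≤ x) (hy : 0 ≤ y)
    (hpq : ((p:ℝ) * q) ≤ x * y) (h1 : q ≤ p + 1) (h2 : p ≤ q + 1) :
    p + q ≤ ⌊x⌋₊ + ⌊y⌋₊ + 1 := by
  set u := ⌊x⌋₊
  set v := ⌊y⌋₊
  have hx1 : x < u + 1 := Nat.lt_floor_add_one x
  have hy1 : y < v + 1 := Nat.lt_floor_add_one y
  have hlt : (p : ℝ) * q < ((u+1) * (v+1) : ℕ) := by
    push_cast
    nlinarith
  have hlt' : p * q < (u + 1) * (v + 1) := by exact_mod_cast hlt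
  by_contra h
  push_neg at h
  have := nat_prod u v p q (by omega) h1 h2
  omega

lemma Spos (a₁ a₂ : ℝ) (h₁ : 0 < a₁) (h₂ : 0 < a₂) (k : ℕ) (hk : 1 ≤ k) :
    ∀ c ∈ {c : ℝ | k ≤ {p : ℕ × Fin 2 | 1 ≤ p.1 ∧ (p.1 : ℝ) * ![a₁, a₂] p.2 ≤ c}.ncard},
      (0:ℝ) ≤ c := by
  intro c hc
  have hne : {p : ℕ × Fin 2 | 1 ≤ p.1 ∧ (p.1 : ℝ) * ![a₁, a₂] p.2 ≤ c}.Nonempty := by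
    apply Set.nonempty_of_ncard_ne_zero
    have := Set.mem_setOf.mp hc
    omega
  obtain ⟨⟨m, j⟩, hm1, hm2⟩ := hne
  have haj : 0 < ![a₁, a₂] j := by fin_cases j <;> simpa
  have h0 : (0:ℝ) < (m:ℝ) * ![a₁, a₂] j := by
    apply mul_pos _ haj
    exact_mod_cast hm1
  linarith

lemma ckE_le (a₁ a₂ c : ℝ) (h₁ : 0 < a₁) (h₂ : 0 < a₂) (k : ℕ) (hk : 1 ≤ k)
    (hc : 0 ≤ c) (h : k ≤ ⌊c/a₁⌋₊ + ⌊c/a₂⌋₊) : ckE ![a₁, a₂] k ≤ c := by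
  apply csInf_le ⟨0, Spos a₁ a₂ h₁ h₂ k hk⟩
  show k ≤ _
  rw [cardT a₁ a₂ c h₁ h₂ hc]
  exact h

lemma ckE_ge (a₁ a₂ c : ℝ) (h₁ : 0 < a₁) (h₂ : 0 < a₂) (k : ℕ) (hk : 1 ≤ k)
    (hne : ∃ x : ℝ, 0 ≤ x ∧ k ≤ ⌊x/a₁⌋₊ + ⌊x/a₂⌋₊)
    (h : ∀ x : ℝ, 0 ≤ x → k ≤ ⌊x/a₁⌋₊ + ⌊x/a₂⌋₊ → c ≤ x) : c ≤ ckE ![a₁, a₂] k := by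
  apply le_csInf
  · obtain ⟨x, hx0, hx⟩ := hne
    exact ⟨x, by show k ≤ _; rw [cardT a₁ a₂ x h₁ h₂ hx0]; exact hx⟩
  · intro b hb
    have hb0 : (0:ℝ) ≤ b := Spos a₁ a₂ h₁ h₂ k hk b hb
    apply h b hb0
    have := Set.mem_setOf.mp hb
    rwa [cardT a₁ a₂ b h₁ h₂ hb0] at this

/-- The 4-dimensional ellipsoid maximizing the `k`-th capacity ratio is
`E(⌈k/2⌉, ⌈(k+1)/2⌉)`: for all `a₁, a₂ > 0` the ratio `c_k(E(a₁,a₂))/√(a₁a₂)` is at most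
`√(⌈k/2⌉⌈(k+1)/2⌉)`, with equality at `(a₁,a₂) = (⌈k/2⌉, ⌈(k+1)/2⌉)`. -/
theorem stmt7 (k : ℕ) (hk : 1 ≤ k) :
    (∀ a₁ a₂ : ℝ, 0 < a₁ → 0 < a₂ →
      ckE ![a₁, a₂] k / Real.sqrt (a₁ * a₂) ≤
        Real.sqrt ((⌈(k : ℝ)/2⌉₊ : ℝ) * (⌈((k : ℝ) + 1)/2⌉₊ : ℝ))) ∧
    ckE ![(⌈(k : ℝ)/2⌉₊ : ℝ), (⌈((k : ℝ) + 1)/2⌉₊ : ℝ)] k /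
        Real.sqrt ((⌈(k : ℝ)/2⌉₊ : ℝ) * (⌈((k : ℝ) + 1)/2⌉₊ : ℝ)) =
      Real.sqrt ((⌈(k : ℝ)/2⌉₊ : ℝ) * (⌈((k : ℝ) + 1)/2⌉₊ : ℝ)) := by
  set p := ⌈(k:ℝ)/2⌉₊ with hpdef
  set q := ⌈((k:ℝ)+1)/2⌉₊ with hqdef
  have hp1 : k ≤ 2 * p := by
    have h := Nat.le_ceil ((k:ℝ)/2)
    have h2 : (k:ℝ) ≤ 2 * p := by rw [hpdef]; linarith
    exact_mod_cast h2
  have hp2 : 2 * p ≤ k + 1 := by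
    have hn : k ≤ 2 * ((k+1)/2) := by omega
    have h : ((k:ℝ))/2 ≤ (((k+1)/2 : ℕ) : ℝ) := by
      have := (Nat.cast_le (α := ℝ)).mpr hn
      push_cast at this
      linarith
    have := Nat.ceil_le.mpr h
    omega
  have hq1 : k + 1 ≤ 2 * q := by
    have h := Nat.le_ceil (((k:ℝ)+1)/2)
    have h2 : (k:ℝ) + 1 ≤ 2 * q := by rw [hqdef]; linarith
    exact_mod_cast h2
  have hq2 : 2 * q ≤ k + 2 := by
    have hn : k + 1 ≤ 2 * ((k+2)/2) := by omega
    have h : ((k:ℝ)+1)/2 ≤ (((k+2)/2 : ℕ) : ℝ) := by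
      have := (Nat.cast_le (α := ℝ)).mpr hn
      push_cast at this
      linarith
    have := Nat.ceil_le.mpr h
    omega
  have hp0 : 1 ≤ p := by omega
  have hq0 : 1 ≤ q := by omega
  have hpr : (0:ℝ) < p := by exact_mod_cast hp0
  have hqr : (0:ℝ) < q := by exact_mod_cast hq0
  have hpqpos : (0:ℝ) < (p:ℝ) * (q:ℝ) := mul_pos hpr hqr
  constructor
  · intro a₁ a₂ h₁ h₂
    set c := Real.sqrt (a₁ * a₂ * ((p:ℝ) * q)) with hcdef
    have hc0 : 0 ≤ c := Real.sqrt_nonneg _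
    have hkey : k ≤ ⌊c/a₁⌋₊ + ⌊c/a₂⌋₊ := by
      have hcc : c * c = a₁ * a₂ * ((p:ℝ) * q) :=
        Real.mul_self_sqrt (by positivity)
      have hxy : ((p:ℝ) * q) ≤ (c/a₁) * (c/a₂) := by
        rw [div_mul_div_comm, hcc,
          mul_div_cancel_left₀ _ (ne_of_gt (mul_pos h₁ h₂))]
      have := key (c/a₁) (c/a₂) p q (by positivity) (by positivity) hxy
        (by omega) (by omega)
      omega
    have hle := ckE_le a₁ a₂ c h₁ h₂ k hk hc0 hkey
    rw [div_le_iff₀ (Real.sqrt_pos.mpr (mul_pos h₁ h₂))]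
    calc ckE ![a₁, a₂] k ≤ c := hle
      _ = Real.sqrt ((p:ℝ) * q) * Real.sqrt (a₁ * a₂) := by
          rw [hcdef, Real.sqrt_mul (mul_pos h₁ h₂).le, mul_comm]
  · have e1 : ((p:ℝ) * q) / p = (q:ℝ) := by field_simp
    have e2 : ((p:ℝ) * q) / q = (p:ℝ) := by field_simp
    have hcount : k ≤ ⌊((p:ℝ) * q)/(p:ℝ)⌋₊ + ⌊((p:ℝ) * q)/(q:ℝ)⌋₊ := by
      rw [e1, e2, Nat.floor_natCast, Nat.floor_natCast]
      omega
    have hval : ckE ![(p:ℝ), (q:ℝ)] k = (p:ℝ) * q := by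
      apply le_antisymm
      · exact ckE_le _ _ _ hpr hqr k hk hpqpos.le hcount
      · apply ckE_ge _ _ _ hpr hqr k hk ⟨(p:ℝ) * q, hpqpos.le, hcount⟩
        intro x hx0 hx
        by_contra hlt
        push_neg at hlt
        have f1 : ⌊x/(p:ℝ)⌋₊ < q := by
          rw [Nat.floor_lt (div_nonneg hx0 hpr.le), div_lt_iff₀ hpr]
          calc x < (p:ℝ) * q := hlt
            _ = (q:ℝ) * p := by ring
        have f2 : ⌊x/(q:ℝ)⌋₊ < p := by
          rw [Nat.floor_lt (div_nonneg hx0 hqr.le), div_lt_iff₀ hqr]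
          calc x < (p:ℝ) * q := hlt
            _ = (p:ℝ) * q := by ring
        omega
    rw [hval, Real.div_sqrt]
end

section
/- Let $\gamma\in W^{1,2}(S^1,\mathds{C}^n)$ with mean zero, Fourier coefficients $\gamma_k$, and suppose the symplectic action $a(\gamma)=\pi\sum_k k\|\gamma_k\|^2$ is positive while the orthogonal projection of $\gamma$ onto the Fourier modes $|k|\le N$ lies in the negative-mode subspace (i.e.\ $\gamma_k=0$ for $0\le k\le N$). Let $h^*:\mathds{C}^n\to[0,\infty)$ satisfy $h^*(w)\ge r\|w\|^2$ for some $r>0$. Then $\int_{S^1}h^*(-J\dot\gamma(t))\,dt \ge 4\pi r N\, a(\gamma)$; in particular the Clarke ratio $\widetilde\Psi(\dot\gamma)=\mathcal H(\dot\gamma)/a(\gamma)$ is at least $4\pi rN$. -/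
open MeasureTheory

/-- Let `γ ∈ W^{1,2}(S¹, ℂⁿ)` have mean zero and Fourier coefficients `g m`, with positive
symplectic action `A = π ∑ₘ m ‖g m‖²`, and suppose `g m = 0` for `0 ≤ m ≤ N` (the projection
onto the modes `|m| ≤ N` lies in the negative-mode subspace).  If `h* ≥ r‖·‖²` with `r > 0`,
then `∫_{S¹} h*(-J γ'(t)) dt ≥ 4πrN·A`; in particular the Clarke ratio `H(γ')/A` is at
least `4πrN`. -/
theorem stmt10 (n N : ℕ) (hN : 1 ≤ N) (r : ℝ) (hr : 0 < r)
    (g : ℤ → EuclideanSpace ℂ (Fin n))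
    (γ γ' : ℝ → EuclideanSpace ℂ (Fin n))
    (hγ : ∀ t : ℝ, HasSum
      (fun m : ℤ => Complex.exp (2 * Real.pi * Complex.I * (m : ℂ) * (t : ℂ)) • g m) (γ t))
    (hγ' : ∀ t : ℝ, HasSum
      (fun m : ℤ => ((2 * Real.pi * Complex.I * (m : ℂ)) *
        Complex.exp (2 * Real.pi * Complex.I * (m : ℂ) * (t : ℂ))) • g m) (γ' t))
    (hmean : g 0 = 0)
    (hsum : Summable fun m : ℤ => ((m : ℝ)) ^ 2 * ‖g m‖ ^ 2)
    (hproj : ∀ m : ℤ, 0 ≤ m → m ≤ (N : ℤ) → g m = 0)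
    (A : ℝ) (hA : A = Real.pi * ∑' m : ℤ, (m : ℝ) * ‖g m‖ ^ 2) (hApos : 0 < A)
    (hstar : EuclideanSpace ℂ (Fin n) → ℝ) (hlow : ∀ w, r * ‖w‖ ^ 2 ≤ hstar w)
    (hL2int : IntegrableOn (fun t => ‖γ' t‖ ^ 2) (Set.Ioc (0:ℝ) 1))
    (hL2 : (∫ t in Set.Ioc (0:ℝ) 1, ‖γ' t‖ ^ 2) =
      ∑' m : ℤ, (2 * Real.pi * (m : ℝ)) ^ 2 * ‖g m‖ ^ 2)
    (hint : IntegrableOn (fun t => hstar ((-Complex.I) • γ' t)) (Set.Ioc (0:ℝ) 1)) :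
    4 * Real.pi * r * (N : ℝ) * A ≤ ∫ t in Set.Ioc (0:ℝ) 1, hstar ((-Complex.I) • γ' t) ∧
    4 * Real.pi * r * (N : ℝ) ≤ (∫ t in Set.Ioc (0:ℝ) 1, hstar ((-Complex.I) • γ' t)) / A := by

  have hpi := Real.pi_pos
  -- summability of m * ‖g m‖²
  have hle : ∀ m : ℤ, |(m : ℝ) * ‖g m‖ ^ 2| ≤ (m : ℝ) ^ 2 * ‖g m‖ ^ 2 := by
    intro m
    rw [abs_mul, abs_of_nonneg (by positivity : (0:ℝ) ≤ ‖g m‖ ^ 2)]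
    rcases eq_or_ne m 0 with h | h
    · simp [h]
    · have h1 : (1:ℝ) ≤ |(m:ℝ)| := by
        have := Int.one_le_abs h
        calc (1:ℝ) = ((1:ℤ):ℝ) := by norm_num
        _ ≤ ((|m|:ℤ):ℝ) := by exact_mod_cast this
        _ = |(m:ℝ)| := by push_cast; ring
      have h2 : |(m:ℝ)| ≤ (m:ℝ)^2 := by
        calc |(m:ℝ)| = |(m:ℝ)| * 1 := by ring
        _ ≤ |(m:ℝ)| * |(m:ℝ)| := by nlinarith [abs_nonneg (m:ℝ)]
        _ = (m:ℝ)^2 := by rw [← abs_mul, ← sq, abs_sq]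
      nlinarith [sq_nonneg ‖g m‖]
  have hS : Summable fun m : ℤ => (m : ℝ) * ‖g m‖ ^ 2 := by
    apply Summable.of_abs
    exact Summable.of_nonneg_of_le (fun m => abs_nonneg _) hle hsum
  -- key: N * ∑ m‖g m‖² ≤ ∑ m²‖g m‖²
  have hkey : (N : ℝ) * ∑' m : ℤ, (m : ℝ) * ‖g m‖ ^ 2 ≤ ∑' m : ℤ, (m : ℝ) ^ 2 * ‖g m‖ ^ 2 := by
    rw [← tsum_mul_left]
    apply Summable.tsum_le_tsum _ (hS.mul_left _) hsum
    intro m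
    rcases lt_or_ge m 0 with hm | hm
    · have hm' : (m : ℝ) < 0 := by exact_mod_cast hm
      have hx : (0:ℝ) ≤ ‖g m‖ ^ 2 := sq_nonneg _
      have h1 : (N:ℝ) * ((m:ℝ) * ‖g m‖ ^ 2) ≤ 0 :=
        mul_nonpos_of_nonneg_of_nonpos (Nat.cast_nonneg N)
          (mul_nonpos_of_nonpos_of_nonneg hm'.le hx)
      exact h1.trans (by positivity)
    · rcases le_or_gt m (N : ℤ) with hm2 | hm2
      · simp [hproj m hm hm2]
      · have hm' : (N : ℝ) ≤ (m : ℝ) := by exact_mod_cast hm2.le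
        have hm0 : (0:ℝ) ≤ (m:ℝ) := by exact_mod_cast hm
        have h := mul_le_mul_of_nonneg_right hm' (mul_nonneg hm0 (sq_nonneg ‖g m‖))
        calc (N:ℝ) * ((m:ℝ) * ‖g m‖ ^ 2) ≤ (m:ℝ) * ((m:ℝ) * ‖g m‖ ^ 2) := h
        _ = (m:ℝ) ^ 2 * ‖g m‖ ^ 2 := by ring
  -- L² lower bound for the action
  have hL2ge : 4 * Real.pi * (N : ℝ) * A ≤ ∫ t in Set.Ioc (0:ℝ) 1, ‖γ' t‖ ^ 2 := by
    rw [hL2, hA]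
    have : ∀ m : ℤ, (2 * Real.pi * (m : ℝ)) ^ 2 * ‖g m‖ ^ 2
        = (4 * Real.pi ^ 2) * ((m : ℝ) ^ 2 * ‖g m‖ ^ 2) := by intro m; ring
    rw [tsum_congr this, tsum_mul_left]
    nlinarith [hkey, sq_nonneg Real.pi]
  -- integral comparison
  have hIge : r * ∫ t in Set.Ioc (0:ℝ) 1, ‖γ' t‖ ^ 2
      ≤ ∫ t in Set.Ioc (0:ℝ) 1, hstar ((-Complex.I) • γ' t) := by
    rw [← integral_const_mul]
    apply setIntegral_mono_on (hL2int.const_mul r) hint measurableSet_Ioc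
    intro t _
    have := hlow ((-Complex.I) • γ' t)
    have hn : ‖(-Complex.I) • γ' t‖ = ‖γ' t‖ := by
      rw [norm_smul]; simp
    rw [hn] at this
    exact this
  have hmain : 4 * Real.pi * r * (N : ℝ) * A
      ≤ ∫ t in Set.Ioc (0:ℝ) 1, hstar ((-Complex.I) • γ' t) := by
    calc 4 * Real.pi * r * (N : ℝ) * A = r * (4 * Real.pi * (N : ℝ) * A) := by ring
    _ ≤ r * ∫ t in Set.Ioc (0:ℝ) 1, ‖γ' t‖ ^ 2 := by
        exact mul_le_mul_of_nonneg_left hL2ge hr.le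
    _ ≤ _ := hIge
  refine ⟨hmain, ?_⟩
  rw [le_div_iff₀ hApos]
  linarith [hmain]
end

section
/- (Gutt–Hutchings concave comparison) Let $f:[0,x_0]\to[0,\infty)$ be convex non-increasing with $f>0$ on $[0,x_0)$ and $f(x_0)=0$, defining the concave profile $\Omega=\{(x,y):0\le x\le x_0,\ 0\le y\le f(x)\}$. Define $c_k(\Omega)=\max\{[v]_\Omega : v=(v_1,v_2)\in\{1,\dots,k\}^2,\ v_1+v_2=k+1\}$ where $[v]_\Omega=\min\{\langle v,w\rangle : w\in\mathrm{graph}(f)\}$. Then there exists a triangle profile $\Upsilon\subseteq\Omega$ (the subgraph of an affine function $g\le f$ touching the graph of $f$) such that $c_k(\Upsilon)\ge c_k(\Omega)$ and $\mathrm{area}(\Upsilon)\le\mathrm{area}(\Omega)$; consequently $c_k(\Omega)/\sqrt{2\,\mathrm{area}(\Omega)} \le \sqrt{\lceil k/2\rceil\lceil(k+1)/2\rceil}$. -/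
/-!
Let `v = (v₁, v₂)` attain the maximum defining `c_k(Ω)` and put `m = [v]_Ω > 0`. Since
`v₁ x + v₂ f x ≥ m` on `[0, x₀]`, the triangle `{v₁ x + v₂ y ≤ m}`, i.e. the triangle profile with
legs `a₁ = m / v₁`, `a₂ = m / v₂`, lies in `Ω`. Strictly below `m` there are only
`(v₁ - 1) + (v₂ - 1) = k - 1` positive multiples of `a₁` and `a₂`, so `c_k(E(a₁, a₂)) ≥ m`. Finally
`m² = v₁ v₂ a₁ a₂ ≤ ⌈k/2⌉⌈(k+1)/2⌉ · 2 area(Ω)`, as `v₁ + v₂ = k + 1` forces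
`v₁ v₂ ≤ ⌈k/2⌉⌈(k+1)/2⌉` and the triangle has area `a₁ a₂ / 2`.
-/
open MeasureTheory

/-- The triangle profile with legs `a₁, a₂`: the profile of the ellipsoid `E(a₁,a₂)`. -/
def triangleProfile (a₁ a₂ : ℝ) : Set (ℝ × ℝ) :=
  {p | 0 ≤ p.1 ∧ 0 ≤ p.2 ∧ p.1 / a₁ + p.2 / a₂ ≤ 1}

open Set

lemma Nat.ceil_natCast_div_two {K : Type*} [Field K] [LinearOrder K] [IsStrictOrderedRing K]
    [FloorSemiring K] (n : ℕ) : ⌈(n : K) / 2⌉₊ = (n + 1) / 2 := by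
  rcases Nat.even_or_odd' n with ⟨m, rfl | rfl⟩
  · push_cast
    rw [mul_div_cancel_left₀ _ two_ne_zero, Nat.ceil_natCast]
    omega
  · rw [show (2 * m + 1 + 1) / 2 = m + 1 by omega, Nat.ceil_eq_iff (by omega)]
    push_cast
    constructor <;> linarith

lemma Nat.mul_le_of_add_eq {a b n : ℕ} (h : a + b = n) : a * b ≤ n / 2 * ((n + 1) / 2) := by
  wlog hab : a ≤ b generalizing a b
  · rw [mul_comm]
    exact this (by omega) (by omega)
  have ha : a ≤ n / 2 := by omega
  have hsum : n / 2 + (n + 1) / 2 = n := by omega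
  zify at *
  nlinarith [mul_nonneg (by omega : (0 : ℤ) ≤ n / 2 - a) (by omega : (0 : ℤ) ≤ b - n / 2)]

lemma natCast_mul_le_ceil_mul_ceil {v₁ v₂ k : ℕ} (h : v₁ + v₂ = k + 1) :
    (v₁ : ℝ) * v₂ ≤ ⌈(k : ℝ) / 2⌉₊ * ⌈((k : ℝ) + 1) / 2⌉₊ := by
  rw [← Nat.cast_succ, Nat.ceil_natCast_div_two, Nat.ceil_natCast_div_two]
  exact_mod_cast Nat.mul_le_of_add_eq h

lemma div_sqrt_two_mul_le_sqrt_ceil_mul_ceil {v₁ v₂ k : ℕ} (h : v₁ + v₂ = k + 1)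
    {m a₁ a₂ A : ℝ} (hm : 0 ≤ m) (ha₁ : 0 ≤ a₁) (ha₂ : 0 ≤ a₂) (hm₁ : v₁ * a₁ = m)
    (hm₂ : v₂ * a₂ = m) (hA : a₁ * a₂ / 2 ≤ A) :
    m / √(2 * A) ≤ √(⌈(k : ℝ) / 2⌉₊ * ⌈((k : ℝ) + 1) / 2⌉₊) := by
  have hA₀ : 0 ≤ 2 * A := by linarith [mul_nonneg ha₁ ha₂]
  refine div_le_of_le_mul₀ (Real.sqrt_nonneg _) (Real.sqrt_nonneg _) ?_
  rw [← Real.sqrt_mul (by positivity), Real.le_sqrt hm (by positivity)]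
  calc m ^ 2 = (v₁ * v₂ : ℝ) * (a₁ * a₂) := by rw [sq]; nth_rw 1 [← hm₁, ← hm₂]; ring
    _ ≤ ⌈(k : ℝ) / 2⌉₊ * ⌈((k : ℝ) + 1) / 2⌉₊ * (2 * A) :=
      mul_le_mul (natCast_mul_le_ceil_mul_ceil h) (by linarith) (mul_nonneg ha₁ ha₂)
        (by positivity)

lemma finite_setOf_natCast_mul_le {n : ℕ} {a : Fin n → ℝ} (ha : ∀ i, 0 < a i) (c : ℝ) :
    {p : ℕ × Fin n | 1 ≤ p.1 ∧ (p.1 : ℝ) * a p.2 ≤ c}.Finite := by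
  refine ((finite_Iic (Finset.univ.sup fun i => ⌈c / a i⌉₊)).prod finite_univ).subset ?_
  rintro ⟨j, i⟩ ⟨-, hj⟩
  have hj' : (j : ℝ) ≤ c / a i := (le_div_iff₀ (ha i)).2 hj
  exact ⟨(Nat.cast_le.1 (hj'.trans (Nat.le_ceil _))).trans
    (Finset.le_sup (f := fun i => ⌈c / a i⌉₊) (Finset.mem_univ i)), trivial⟩

lemma le_ckE_of_le_mul {n : ℕ} [NeZero n] {a : Fin n → ℝ} (ha : ∀ i, 0 < a i) {m : ℝ}
    (v : Fin n → ℕ) (hv : ∀ i, m ≤ v i * a i) {k : ℕ} (hk : ∑ i, (v i - 1) < k) :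
    m ≤ ckE a k := by
  classical
  refine le_csInf ⟨k * a 0, ?_⟩ fun c hc => ?_
  · have hsub : ↑(Finset.Icc 1 k ×ˢ {(0 : Fin n)}) ⊆
        {p : ℕ × Fin n | 1 ≤ p.1 ∧ (p.1 : ℝ) * a p.2 ≤ k * a 0} := by
      intro p hp
      simp only [Finset.coe_product, Finset.coe_Icc, Finset.coe_singleton, mem_prod, mem_Icc,
        mem_singleton_iff] at hp
      obtain ⟨⟨hp1, hpk⟩, hp0⟩ := hp
      rw [mem_ofPred_eq, hp0]
      exact ⟨hp1, mul_le_mul_of_nonneg_right (by exact_mod_cast hpk) (ha 0).le⟩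
    calc k = (Finset.Icc 1 k ×ˢ {(0 : Fin n)}).card := by simp
      _ ≤ _ := by
        rw [← ncard_coe_finset]
        exact ncard_le_ncard hsub (finite_setOf_natCast_mul_le ha _)
  · by_contra! hcm
    have hsub : {p : ℕ × Fin n | 1 ≤ p.1 ∧ (p.1 : ℝ) * a p.2 ≤ c} ⊆
        ↑(Finset.univ.biUnion fun i => Finset.Ico 1 (v i) ×ˢ {i}) := by
      rintro ⟨j, i⟩ ⟨hj, hjc⟩
      have hjv : (j : ℝ) < v i :=
        lt_of_mul_lt_mul_right (hjc.trans_lt (hcm.trans_le (hv i))) (ha i).le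
      simp only [Finset.coe_biUnion, Finset.coe_univ, mem_univ, iUnion_true, mem_iUnion,
        Finset.coe_product, Finset.coe_Ico, Finset.coe_singleton, mem_prod, mem_Ico,
        mem_singleton_iff]
      exact ⟨i, ⟨hj, by exact_mod_cast hjv⟩, rfl⟩
    have hcard := (ncard_le_ncard hsub (Finset.finite_toSet _)).trans
      ((ncard_coe_finset _).trans_le Finset.card_biUnion_le)
    simp only [Finset.card_product, Finset.card_singleton, mul_one, Nat.card_Ico] at hcard
    exact absurd (hc.trans hcard) (by omega)

lemma le_ckE_div_div {v₁ v₂ k : ℕ} (h₁ : 1 ≤ v₁) (h₂ : 1 ≤ v₂) (h : v₁ + v₂ = k + 1) {m : ℝ}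
    (hm : 0 < m) : m ≤ ckE ![m / v₁, m / v₂] k := by
  have h₁' : (0 : ℝ) < v₁ := Nat.cast_pos.2 h₁
  have h₂' : (0 : ℝ) < v₂ := Nat.cast_pos.2 h₂
  refine le_ckE_of_le_mul (Fin.forall_fin_two.2 ⟨div_pos hm h₁', div_pos hm h₂'⟩) ![v₁, v₂]
    (Fin.forall_fin_two.2 ⟨(mul_div_cancel₀ _ h₁'.ne').ge, (mul_div_cancel₀ _ h₂'.ne').ge⟩) ?_
  simp only [Fin.sum_univ_two, Matrix.cons_val_zero, Matrix.cons_val_one]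
  omega

def concaveProfile (x₀ : ℝ) (f : ℝ → ℝ) : Set (ℝ × ℝ) :=
  {p | 0 ≤ p.1 ∧ p.1 ≤ x₀ ∧ 0 ≤ p.2 ∧ p.2 ≤ f p.1}

/-- The paper's `[v]_Ω`: the minimum of `⟨v, w⟩` over the graph `w = (x, f x)` of `f`. -/
noncomputable def concaveBracket (x₀ : ℝ) (f : ℝ → ℝ) (v₁ v₂ : ℝ) : ℝ :=
  sInf {c | ∃ x ∈ Icc 0 x₀, c = v₁ * x + v₂ * f x}

section concaveProfile

variable {x₀ : ℝ} {f : ℝ → ℝ} {v₁ v₂ : ℝ}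

lemma concaveBracket_le (hf : ∀ x ∈ Icc 0 x₀, 0 ≤ f x) (h₁ : 0 ≤ v₁) (h₂ : 0 ≤ v₂) {x : ℝ}
    (hx : x ∈ Icc 0 x₀) : concaveBracket x₀ f v₁ v₂ ≤ v₁ * x + v₂ * f x := by
  refine csInf_le ⟨0, ?_⟩ ⟨x, hx, rfl⟩
  rintro c ⟨y, hy, rfl⟩
  have := hf y hy
  have := hy.1
  positivity

lemma concaveBracket_pos (hanti : AntitoneOn f (Icc 0 x₀)) (hf : ∀ x ∈ Icc 0 x₀, 0 ≤ f x)
    {t : ℝ} (ht : t ∈ Ioc 0 x₀) (hft : 0 < f t) (h₁ : 0 < v₁) (h₂ : 0 < v₂) :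
    0 < concaveBracket x₀ f v₁ v₂ := by
  have hlb : min (v₁ * t) (v₂ * f t) ≤ concaveBracket x₀ f v₁ v₂ := by
    refine le_csInf ⟨_, t, Ioc_subset_Icc_self ht, rfl⟩ ?_
    rintro c ⟨x, hx, rfl⟩
    have hfx := hf x hx
    rcases le_total x t with hxt | htx
    · have := hanti hx (Ioc_subset_Icc_self ht) hxt
      have := hx.1
      exact (min_le_right _ _).trans (by nlinarith)
    · exact (min_le_left _ _).trans (by nlinarith)
  exact (lt_min (mul_pos h₁ ht.1) (mul_pos h₂ hft)).trans_le hlb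

lemma mem_triangleProfile_div_iff {m : ℝ} (hm : 0 < m) {p : ℝ × ℝ} :
    p ∈ triangleProfile (m / v₁) (m / v₂) ↔ 0 ≤ p.1 ∧ 0 ≤ p.2 ∧ v₁ * p.1 + v₂ * p.2 ≤ m := by
  simp only [triangleProfile, mem_ofPred_eq, div_div_eq_mul_div, ← add_div, div_le_one hm,
    mul_comm p.1, mul_comm p.2]

lemma triangleProfile_subset_concaveProfile {m : ℝ} (hm : 0 < m) (h₁ : 0 < v₁) (h₂ : 0 < v₂)
    (hx₀ : 0 ≤ x₀) (hend : f x₀ = 0) (hle : ∀ x ∈ Icc 0 x₀, m ≤ v₁ * x + v₂ * f x) :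
    triangleProfile (m / v₁) (m / v₂) ⊆ concaveProfile x₀ f := by
  rintro ⟨x, y⟩ hp
  obtain ⟨hx, hy, hxy⟩ := (mem_triangleProfile_div_iff hm).1 hp
  have hx₀le := hle x₀ ⟨hx₀, le_rfl⟩
  rw [hend, mul_zero, add_zero] at hx₀le
  have hxx₀ : x ≤ x₀ := le_of_mul_le_mul_left (by nlinarith) h₁
  exact ⟨hx, hxx₀, hy, le_of_mul_le_mul_left (by nlinarith [hle x ⟨hx, hxx₀⟩]) h₂⟩

lemma volume_concaveProfile_ne_top (hanti : AntitoneOn f (Icc 0 x₀)) :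
    volume (concaveProfile x₀ f) ≠ ⊤ := by
  refine ne_top_of_le_ne_top isCompact_Icc.measure_lt_top.ne
    (measure_mono (?_ : concaveProfile x₀ f ⊆ Icc (0, 0) (x₀, f 0)))
  rintro ⟨x, y⟩ ⟨hx, hxx₀, hy, hyf⟩
  exact ⟨⟨hx, hy⟩, hxx₀, hyf.trans (hanti ⟨le_rfl, hx.trans hxx₀⟩ ⟨hx, hxx₀⟩ hx)⟩

end concaveProfile

lemma ofReal_le_volume_triangleProfile {a₁ a₂ : ℝ} (h₁ : 0 < a₁) (h₂ : 0 < a₂) :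
    ENNReal.ofReal (a₁ * a₂ / 2) ≤ volume (triangleProfile a₁ a₂) := by
  set L : ℝ → ℝ := fun x => a₂ * (1 - x / a₁)
  have hsub : regionBetween (fun _ => 0) L (Ioo 0 a₁) ⊆ triangleProfile a₁ a₂ := by
    rintro ⟨x, y⟩ ⟨hx, hy⟩
    have : y / a₂ < 1 - x / a₁ := by rw [div_lt_iff₀ h₂, mul_comm]; exact hy.2
    exact ⟨hx.1.le, hy.1.le, by linarith⟩
  have hL : ∫ x in Ioo 0 a₁, L x = a₁ * a₂ / 2 := by
    rw [← integral_Ioc_eq_integral_Ioo, ← intervalIntegral.integral_of_le h₁.le,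
      intervalIntegral.integral_const_mul, intervalIntegral.integral_sub intervalIntegrable_const
        (intervalIntegral.intervalIntegrable_id.div_const _), intervalIntegral.integral_div,
      integral_id]
    simp only [intervalIntegral.integral_const, smul_eq_mul]
    field_simp
    ring
  have hLint : IntegrableOn L (Ioo 0 a₁) :=
    ((by fun_prop : Continuous L).integrableOn_Icc).mono_set Ioo_subset_Icc_self
  calc ENNReal.ofReal (a₁ * a₂ / 2) = volume (regionBetween (fun _ => 0) L (Ioo 0 a₁)) := by
        rw [Measure.volume_eq_prod, volume_regionBetween_eq_integral integrableOn_zero hLint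
          measurableSet_Ioo fun x hx => ?_]
        · simp [hL]
        · exact mul_nonneg h₂.le (sub_nonneg.2 ((div_le_one h₁).2 hx.2.le))
    _ ≤ _ := measure_mono hsub

lemma exists_sSup_eq_of_add_eq_succ {k : ℕ} (hk : 1 ≤ k) (g : ℕ → ℕ → ℝ) :
    ∃ v₁ v₂ : ℕ, 1 ≤ v₁ ∧ 1 ≤ v₂ ∧ v₁ + v₂ = k + 1 ∧
      sSup {y : ℝ | ∃ v₁ v₂ : ℕ, 1 ≤ v₁ ∧ v₁ ≤ k ∧ 1 ≤ v₂ ∧ v₂ ≤ k ∧ v₁ + v₂ = k + 1 ∧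
        y = g v₁ v₂} = g v₁ v₂ := by
  set S := {y : ℝ | ∃ v₁ v₂ : ℕ, 1 ≤ v₁ ∧ v₁ ≤ k ∧ 1 ≤ v₂ ∧ v₂ ≤ k ∧ v₁ + v₂ = k + 1 ∧
    y = g v₁ v₂}
  have hne : S.Nonempty := ⟨_, 1, k, le_rfl, hk, hk, le_rfl, by omega, rfl⟩
  have hfin : S.Finite := by
    refine ((finite_Icc 1 k).image fun w => g w (k + 1 - w)).subset ?_
    rintro y ⟨v₁, v₂, h₁, hk₁, -, -, hsum, rfl⟩
    exact ⟨v₁, ⟨h₁, hk₁⟩, congrArg (g v₁) (by omega)⟩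
  obtain ⟨v₁, v₂, h₁, -, h₂, -, hsum, hmax⟩ := hne.csSup_mem hfin
  exact ⟨v₁, v₂, h₁, h₂, hsum, hmax⟩

theorem stmt13_general (k : ℕ) (hk : 1 ≤ k) (x₀ : ℝ) (hx₀ : 0 < x₀) (f : ℝ → ℝ)
    (hanti : AntitoneOn f (Set.Icc 0 x₀))
    (hpos : ∀ x ∈ Set.Ico 0 x₀, 0 < f x)
    (hend : f x₀ = 0) :
    ∃ a₁ a₂ : ℝ, 0 < a₁ ∧ 0 < a₂ ∧
      triangleProfile a₁ a₂ ⊆ {p : ℝ × ℝ | 0 ≤ p.1 ∧ p.1 ≤ x₀ ∧ 0 ≤ p.2 ∧ p.2 ≤ f p.1} ∧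
      sSup {y : ℝ | ∃ v₁ v₂ : ℕ, 1 ≤ v₁ ∧ v₁ ≤ k ∧ 1 ≤ v₂ ∧ v₂ ≤ k ∧ v₁ + v₂ = k + 1 ∧
          y = sInf {c : ℝ | ∃ x ∈ Set.Icc 0 x₀, c = (v₁ : ℝ) * x + (v₂ : ℝ) * f x}} ≤
        ckE ![a₁, a₂] k ∧
      (volume (triangleProfile a₁ a₂)).toReal ≤
        (volume {p : ℝ × ℝ | 0 ≤ p.1 ∧ p.1 ≤ x₀ ∧ 0 ≤ p.2 ∧ p.2 ≤ f p.1}).toReal ∧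
      sSup {y : ℝ | ∃ v₁ v₂ : ℕ, 1 ≤ v₁ ∧ v₁ ≤ k ∧ 1 ≤ v₂ ∧ v₂ ≤ k ∧ v₁ + v₂ = k + 1 ∧
          y = sInf {c : ℝ | ∃ x ∈ Set.Icc 0 x₀, c = (v₁ : ℝ) * x + (v₂ : ℝ) * f x}} /
        Real.sqrt (2 * (volume {p : ℝ × ℝ | 0 ≤ p.1 ∧ p.1 ≤ x₀ ∧ 0 ≤ p.2 ∧ p.2 ≤ f p.1}).toReal) ≤
        Real.sqrt ((⌈(k : ℝ)/2⌉₊ : ℝ) * (⌈((k : ℝ) + 1)/2⌉₊ : ℝ)) := by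
  obtain ⟨v₁, v₂, hv₁, hv₂, hsum, hsup⟩ :=
    exists_sSup_eq_of_add_eq_succ hk fun v₁ v₂ => concaveBracket x₀ f v₁ v₂
  unfold concaveBracket at hsup
  rw [hsup]
  have h₁ : (0 : ℝ) < v₁ := Nat.cast_pos.2 hv₁
  have h₂ : (0 : ℝ) < v₂ := Nat.cast_pos.2 hv₂
  have hf : ∀ x ∈ Icc 0 x₀, 0 ≤ f x := fun x hx => hend ▸ hanti hx ⟨hx₀.le, le_rfl⟩ hx.2
  set m := concaveBracket x₀ f v₁ v₂
  have hm : 0 < m := concaveBracket_pos hanti hf (t := x₀ / 2) ⟨by positivity, by linarith⟩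
    (hpos _ ⟨by positivity, by linarith⟩) h₁ h₂
  have hsub := triangleProfile_subset_concaveProfile hm h₁ h₂ hx₀.le hend
    fun x hx => concaveBracket_le hf h₁.le h₂.le hx
  have hfin := volume_concaveProfile_ne_top hanti
  have harea : m / v₁ * (m / v₂) / 2 ≤ (volume (concaveProfile x₀ f)).toReal :=
    (ENNReal.ofReal_le_iff_le_toReal hfin).1 <|
      (ofReal_le_volume_triangleProfile (div_pos hm h₁) (div_pos hm h₂)).trans (measure_mono hsub)
  exact ⟨m / v₁, m / v₂, div_pos hm h₁, div_pos hm h₂, hsub, le_ckE_div_div hv₁ hv₂ hsum hm,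
    ENNReal.toReal_mono hfin (measure_mono hsub),
    div_sqrt_two_mul_le_sqrt_ceil_mul_ceil hsum hm.le (div_pos hm h₁).le (div_pos hm h₂).le
      (mul_div_cancel₀ _ h₁.ne') (mul_div_cancel₀ _ h₂.ne') harea⟩

/-- (Gutt–Hutchings concave comparison)  For a concave toric profile `Ω`, the subgraph of a
convex non-increasing `f` with `f > 0` on `[0,x₀)` and `f(x₀) = 0`, with
`c_k(Ω) = max{[v]_Ω : v ∈ {1,…,k}², v₁+v₂ = k+1}` and `[v]_Ω = min{⟨v,w⟩ : w ∈ graph f}`,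
there is a triangle profile `Υ ⊆ Ω` (the subgraph of an affine `g ≤ f`) with
`c_k(Υ) ≥ c_k(Ω)` and `area(Υ) ≤ area(Ω)`; consequently
`c_k(Ω)/√(2 area Ω) ≤ √(⌈k/2⌉⌈(k+1)/2⌉)`. -/
theorem stmt13 (k : ℕ) (hk : 1 ≤ k) (x₀ : ℝ) (hx₀ : 0 < x₀) (f : ℝ → ℝ)
    (hconv : ConvexOn ℝ (Set.Icc 0 x₀) f)
    (hanti : AntitoneOn f (Set.Icc 0 x₀))
    (hpos : ∀ x ∈ Set.Ico 0 x₀, 0 < f x)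
    (hend : f x₀ = 0) :
    ∃ a₁ a₂ : ℝ, 0 < a₁ ∧ 0 < a₂ ∧
      triangleProfile a₁ a₂ ⊆ {p : ℝ × ℝ | 0 ≤ p.1 ∧ p.1 ≤ x₀ ∧ 0 ≤ p.2 ∧ p.2 ≤ f p.1} ∧
      sSup {y : ℝ | ∃ v₁ v₂ : ℕ, 1 ≤ v₁ ∧ v₁ ≤ k ∧ 1 ≤ v₂ ∧ v₂ ≤ k ∧ v₁ + v₂ = k + 1 ∧
          y = sInf {c : ℝ | ∃ x ∈ Set.Icc 0 x₀, c = (v₁ : ℝ) * x + (v₂ : ℝ) * f x}} ≤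
        ckE ![a₁, a₂] k ∧
      (volume (triangleProfile a₁ a₂)).toReal ≤
        (volume {p : ℝ × ℝ | 0 ≤ p.1 ∧ p.1 ≤ x₀ ∧ 0 ≤ p.2 ∧ p.2 ≤ f p.1}).toReal ∧
      sSup {y : ℝ | ∃ v₁ v₂ : ℕ, 1 ≤ v₁ ∧ v₁ ≤ k ∧ 1 ≤ v₂ ∧ v₂ ≤ k ∧ v₁ + v₂ = k + 1 ∧
          y = sInf {c : ℝ | ∃ x ∈ Set.Icc 0 x₀, c = (v₁ : ℝ) * x + (v₂ : ℝ) * f x}} /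
        Real.sqrt (2 * (volume {p : ℝ × ℝ | 0 ≤ p.1 ∧ p.1 ≤ x₀ ∧ 0 ≤ p.2 ∧ p.2 ≤ f p.1}).toReal) ≤
        Real.sqrt ((⌈(k : ℝ)/2⌉₊ : ℝ) * (⌈((k : ℝ) + 1)/2⌉₊ : ℝ)) :=
  stmt13_general k hk x₀ hx₀ f hanti hpos hend
end

section
/- Fix $k\ge2$ and integers $i$ with $0\le i\le k-1$ and real $r\in[0,1)$ with $0<i+r<k$. The inequality $\big((k-i)(k-i-2)+r\big)r+(i+r)(k-i-r)\frac{1-2r}{2(1-r)}>0$ holds in each of the following cases: (i) $i\le k-2$ and $r\in[0,\tfrac12]$; (ii) $i=k-1$ and $r\in[0,\frac{k-1}{2k-1})$; (iii) $i=0$ and $r\in(0,\frac{2k^2-3k}{2k^2-2k-1})$. -/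
/-!
Clearing the positive denominator `2(1-r)` turns the left-hand side into the cubic `numer k i r`.
For `k - i ≥ 2` and `r ≤ 1/2` both of its summands are nonnegative and one is positive.
In the two boundary cases the cubic factors: for `i = k - 1` it is `(1-r)((k-1) - (2k-1)r)`, and for
`i = 0` it is `r((2k²-3k) - (2k²-2k-1)r)`, so the stated bounds on `r` are exactly what makes
the remaining linear factor positive.
-/

namespace Lemma58

def numer (k i r : ℝ) : ℝ :=
  2 * (1 - r) * (((k - i) * (k - i - 2) + r) * r) + (i + r) * (k - i - r) * (1 - 2 * r)

lemma lhs_eq_numer_div {k i r : ℝ} (hr : r ≠ 1) :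
    ((k - i) * (k - i - 2) + r) * r + (i + r) * (k - i - r) * ((1 - 2 * r) / (2 * (1 - r))) =
      numer k i r / (2 * (1 - r)) := by
  have : 1 - r ≠ 0 := sub_ne_zero.mpr hr.symm
  unfold numer
  field_simp

lemma numer_pos_of_add_two_le {k i r : ℝ} (hik : i + 2 ≤ k) (hr0 : 0 ≤ r) (hr : r ≤ 1 / 2)
    (hpos : 0 < i + r) : 0 < numer k i r := by
  have hquad : r ≤ (k - i) * (k - i - 2) + r := by nlinarith
  have hsecond : 0 ≤ (i + r) * (k - i - r) * (1 - 2 * r) := by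
    apply mul_nonneg (mul_nonneg hpos.le _) <;> linarith
  unfold numer
  rcases hr0.eq_or_lt with rfl | hr0
  · simp only [mul_zero, zero_add, add_zero, sub_zero, mul_one]
    exact mul_pos (by simpa using hpos) (by linarith)
  · have hfirst : 0 < 2 * (1 - r) * (((k - i) * (k - i - 2) + r) * r) :=
      mul_pos (by linarith) (mul_pos (by linarith) hr0)
    linarith

lemma numer_sub_one (k r : ℝ) : numer k (k - 1) r = (1 - r) * ((k - 1) - (2 * k - 1) * r) := by
  unfold numer; ring

lemma numer_zero (k r : ℝ) :
    numer k 0 r = r * ((2 * k ^ 2 - 3 * k) - (2 * k ^ 2 - 2 * k - 1) * r) := by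
  unfold numer; ring

lemma numer_sub_one_pos {k r : ℝ} (hk : 1 ≤ k) (hr1 : r < 1)
    (hr : r < (k - 1) / (2 * k - 1)) : 0 < numer k (k - 1) r := by
  rw [numer_sub_one, lt_div_iff₀ (by linarith)] at *
  exact mul_pos (by linarith) (by linarith)

lemma numer_zero_pos {k r : ℝ} (hk : 2 ≤ k) (hr0 : 0 < r)
    (hr : r < (2 * k ^ 2 - 3 * k) / (2 * k ^ 2 - 2 * k - 1)) : 0 < numer k 0 r := by
  rw [numer_zero, lt_div_iff₀ (by nlinarith)] at *
  exact mul_pos hr0 (by linarith)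

end Lemma58

open Lemma58 in
theorem stmt16_general (k i : ℕ) (hk : 2 ≤ k)
    (r : ℝ) (hr0 : 0 ≤ r) (hr1 : r < 1)
    (hpos : 0 < (i : ℝ) + r)
    (hcase :
      (i ≤ k - 2 ∧ r ≤ 1/2) ∨
      (i = k - 1 ∧ r < ((k : ℝ) - 1) / (2 * (k : ℝ) - 1)) ∨
      (i = 0 ∧ 0 < r ∧ r < (2 * (k : ℝ) ^ 2 - 3 * k) / (2 * (k : ℝ) ^ 2 - 2 * k - 1))) :
    0 < (((k : ℝ) - i) * ((k : ℝ) - i - 2) + r) * r +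
        ((i : ℝ) + r) * ((k : ℝ) - i - r) * ((1 - 2 * r) / (2 * (1 - r))) := by
  rw [lhs_eq_numer_div hr1.ne]
  refine div_pos ?_ (by linarith)
  have hk' : (2 : ℝ) ≤ k := by exact_mod_cast hk
  rcases hcase with ⟨hi, hr⟩ | ⟨hi, hr⟩ | ⟨rfl, hr0, hr⟩
  · have hi' : (i : ℝ) + 2 ≤ k := by exact_mod_cast (by omega : i + 2 ≤ k)
    exact numer_pos_of_add_two_le hi' hr0 hr hpos
  · have hi' : (i : ℝ) = k - 1 := by
      rw [hi, Nat.cast_pred (by omega)]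
    rw [hi']
    exact numer_sub_one_pos (by linarith) hr1 hr
  · rw [Nat.cast_zero]
    exact numer_zero_pos hk' hr0 hr

/-- (Lemma 5.8) For integers `k ≥ 2`, `0 ≤ i ≤ k-1` and real `r ∈ [0,1)` with
`0 < i + r < k`, the inequality
`((k-i)(k-i-2) + r)·r + (i+r)(k-i-r)·(1-2r)/(2(1-r)) > 0`
holds if (i) `i ≤ k-2` and `r ∈ [0,1/2]`, or (ii) `i = k-1` and `r < (k-1)/(2k-1)`, or
(iii) `i = 0` and `0 < r < (2k²-3k)/(2k²-2k-1)`. -/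
theorem stmt16 (k i : ℕ) (hk : 2 ≤ k) (hik : i ≤ k - 1)
    (r : ℝ) (hr0 : 0 ≤ r) (hr1 : r < 1)
    (hpos : 0 < (i : ℝ) + r) (hlt : (i : ℝ) + r < (k : ℝ))
    (hcase :
      (i ≤ k - 2 ∧ r ≤ 1/2) ∨
      (i = k - 1 ∧ r < ((k : ℝ) - 1) / (2 * (k : ℝ) - 1)) ∨
      (i = 0 ∧ 0 < r ∧ r < (2 * (k : ℝ) ^ 2 - 3 * k) / (2 * (k : ℝ) ^ 2 - 2 * k - 1))) :
    0 < (((k : ℝ) - i) * ((k : ℝ) - i - 2) + r) * r +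
        ((i : ℝ) + r) * ((k : ℝ) - i - r) * ((1 - 2 * r) / (2 * (1 - r))) :=
  stmt16_general k i hk r hr0 hr1 hpos hcase
end

section
/- Fix $k\ge2$ and integers $i$ with $0\le i\le k-1$, real $r\in(0,1)$ with $0<i+r<k$, and set $\alpha=(i+r)/(k-(i+r))$. The inequality $r < i^2 + \frac{(i+r)^2(2r-1)}{2(1-r)r\alpha}$ holds in each of the following cases: (i) $i>0$ and $r\in[\tfrac12,1)$; (ii) $i=0$ and $r\in(\frac{k}{2k-1},1)$; (iii) $i=k-1$ and $r\in(\frac{k-1}{2k^2-2k-1},1)$. -/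
/-!
Since `α = (i+r)/(k-i-r)`, clearing the positive denominator `2(1-r)r` turns the claim into
positivity of the cubic `(i+r)(2r-1)(k-i-r) - (r-i²)·2(1-r)r`. For `i ≥ 1` and `r ≥ 1/2` the first
term is nonnegative while `r - i² < 0`. For `i = 0` the cubic factors as
`r((2k-1)r - k)`, and for `i = k-1` as `(1-r)((2k²-2k-1)r - (k-1))`, so in both cases the lower
bound on `r` is exactly the condition for positivity.
-/

def alphaGap (i k r : ℝ) : ℝ :=
  (i + r) * (2 * r - 1) * (k - (i + r)) - (r - i ^ 2) * (2 * (1 - r) * r)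

theorem lt_iff_alphaGap_pos {i k r : ℝ} (hr0 : 0 < r) (hr1 : r < 1) (hir : 0 < i + r)
    (hlt : i + r < k) :
    r < i ^ 2 + (i + r) ^ 2 * (2 * r - 1) / (2 * (1 - r) * r * ((i + r) / (k - (i + r)))) ↔
      0 < alphaGap i k r := by
  have hden : 0 < 2 * (1 - r) * r := by nlinarith
  have hfrac : (i + r) ^ 2 * (2 * r - 1) / (2 * (1 - r) * r * ((i + r) / (k - (i + r))))
      = (i + r) * (2 * r - 1) * (k - (i + r)) / (2 * (1 - r) * r) := by
    have : k - (i + r) ≠ 0 := by linarith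
    field_simp
  rw [hfrac, ← sub_lt_iff_lt_add', lt_div_iff₀ hden, alphaGap, sub_pos]

theorem alphaGap_pos_of_one_le {i k r : ℝ} (hi : 1 ≤ i) (hr : 1 / 2 ≤ r) (hr1 : r < 1)
    (hlt : i + r < k) : 0 < alphaGap i k r := by
  have hfirst : 0 ≤ (i + r) * (2 * r - 1) * (k - (i + r)) := by
    apply mul_nonneg (mul_nonneg _ _) _ <;> linarith
  have hsecond : 0 < (i ^ 2 - r) * (2 * (1 - r) * r) := by
    apply mul_pos (by nlinarith) (mul_pos (by linarith) (by linarith))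
  unfold alphaGap
  linarith

theorem alphaGap_zero (k r : ℝ) : alphaGap 0 k r = r * ((2 * k - 1) * r - k) := by
  unfold alphaGap; ring

theorem alphaGap_sub_one (k r : ℝ) :
    alphaGap (k - 1) k r = (1 - r) * ((2 * k ^ 2 - 2 * k - 1) * r - (k - 1)) := by
  unfold alphaGap; ring

theorem stmt17_general (k i : ℕ) (hk : 2 ≤ k)
    (r : ℝ) (hr0 : 0 < r) (hr1 : r < 1)
    (hlt : (i : ℝ) + r < (k : ℝ))
    (α : ℝ) (hα : α = ((i : ℝ) + r) / ((k : ℝ) - ((i : ℝ) + r)))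
    (hcase :
      (0 < i ∧ 1/2 ≤ r) ∨
      (i = 0 ∧ (k : ℝ) / (2 * (k : ℝ) - 1) < r) ∨
      (i = k - 1 ∧ ((k : ℝ) - 1) / (2 * (k : ℝ) ^ 2 - 2 * k - 1) < r)) :
    r < (i : ℝ) ^ 2 + ((i : ℝ) + r) ^ 2 * (2 * r - 1) / (2 * (1 - r) * r * α) := by
  have hk' : (2 : ℝ) ≤ k := by exact_mod_cast hk
  rw [hα, lt_iff_alphaGap_pos hr0 hr1 (by positivity) hlt]
  rcases hcase with ⟨hi, hr⟩ | ⟨rfl, hr⟩ | ⟨rfl, hr⟩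
  · exact alphaGap_pos_of_one_le (by exact_mod_cast hi) hr hr1 hlt
  · rw [div_lt_iff₀ (by linarith)] at hr
    rw [Nat.cast_zero, alphaGap_zero]
    exact mul_pos hr0 (by linarith)
  · rw [div_lt_iff₀ (by nlinarith)] at hr
    rw [Nat.cast_pred (by omega), alphaGap_sub_one]
    exact mul_pos (by linarith) (by linarith)

/-- (Lemma 5.10) For integers `k ≥ 2`, `0 ≤ i ≤ k-1`, real `r ∈ (0,1)` with `0 < i + r < k`
and `α = (i+r)/(k-(i+r))`, the inequality `r < i² + (i+r)²(2r-1)/(2(1-r)rα)` holds if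
(i) `i > 0` and `r ∈ [1/2,1)`, or (ii) `i = 0` and `r ∈ (k/(2k-1), 1)`, or
(iii) `i = k-1` and `r ∈ ((k-1)/(2k²-2k-1), 1)`. -/
theorem stmt17 (k i : ℕ) (hk : 2 ≤ k) (hik : i ≤ k - 1)
    (r : ℝ) (hr0 : 0 < r) (hr1 : r < 1)
    (hlt : (i : ℝ) + r < (k : ℝ))
    (α : ℝ) (hα : α = ((i : ℝ) + r) / ((k : ℝ) - ((i : ℝ) + r)))
    (hcase :
      (0 < i ∧ 1/2 ≤ r) ∨
      (i = 0 ∧ (k : ℝ) / (2 * (k : ℝ) - 1) < r) ∨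
      (i = k - 1 ∧ ((k : ℝ) - 1) / (2 * (k : ℝ) ^ 2 - 2 * k - 1) < r)) :
    r < (i : ℝ) ^ 2 + ((i : ℝ) + r) ^ 2 * (2 * r - 1) / (2 * (1 - r) * r * α) :=
  stmt17_general k i hk r hr0 hr1 hlt α hα hcase
end
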